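/- arXiv:1808.03955 — 15 statements merged into one kernel-verified Lean document; each statement's English description precedes it below -/
import Mathlib

section
/- Let δ > 0 be a real number, let P_δ := [0,2π) × [-δ,δ] ⊆ ℝ², and let w : ℝ² → ℝ³ be defined by w(t,r) := (cos t + r·cos(t/2), sin t + r·sin(t/2), r·sin(t/2)). Then the restriction of w to P_δ is injective if and only if δ ≤ √2. -/
open Real Set

set_option maxHeartbeats 1000000 in
theorem simple_mobius_injective_iff (δ : ℝ) (hδ : 0 < δ)
    (w : ℝ × ℝ → ℝ × ℝ × ℝ)
    (hw : ∀ t r : ℝ, w (t, r) =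
      (Real.cos t + r * Real.cos (t / 2),
       Real.sin t + r * Real.sin (t / 2),
       r * Real.sin (t / 2)))
    (P : Set (ℝ × ℝ)) (hP : P = Set.Ico 0 (2 * π) ×ˢ Set.Icc (-δ) δ) :
    Set.InjOn w P ↔ δ ≤ Real.sqrt 2 := by
  subst hP
  have hpi := Real.pi_pos
  have hs2 : Real.sqrt 2 ^ 2 = 2 := Real.sq_sqrt (by norm_num)
  have hs2pos : 0 < Real.sqrt 2 := Real.sqrt_pos.2 (by norm_num)
  constructor
  · -- injective → δ ≤ √2
    intro hinj
    by_contra hgt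
    push_neg at hgt
    set s0 : ℝ := min (δ / 2) 1 with hs0def
    have hs0le1 : s0 ≤ 1 := min_le_right _ _
    have hs0led : s0 ≤ δ / 2 := min_le_left _ _
    have hsqrt2lt2 : Real.sqrt 2 < 2 := by
      nlinarith [hs2, hs2pos]
    have hs0gt : Real.sqrt 2 / 2 < s0 := by
      apply lt_min (by linarith) (by linarith)
    have hs0pos : 0 < s0 := lt_trans (by positivity) hs0gt
    set a : ℝ := Real.arcsin s0 with hadef
    have ha0 : 0 ≤ a := Real.arcsin_nonneg.2 hs0pos.le
    have hapi : a ≤ π / 2 := Real.arcsin_le_pi_div_two s0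
    have hsin : Real.sin a = s0 := Real.sin_arcsin (by linarith) hs0le1
    set c0 : ℝ := Real.cos a with hc0def
    have hc0 : 0 ≤ c0 := Real.cos_nonneg_of_mem_Icc ⟨by linarith, hapi⟩
    have hpyth : s0 ^ 2 + c0 ^ 2 = 1 := by
      rw [← hsin]; exact Real.sin_sq_add_cos_sq a
    have hs0sq : 1 / 2 < s0 ^ 2 := by
      have h := mul_lt_mul'' hs0gt hs0gt (by positivity) (by positivity)
      nlinarith [h, hs2]
    have hc0sq : c0 ^ 2 < 1 / 2 := by linarith
    have h2c0 : 2 * c0 < Real.sqrt 2 := by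
      by_contra h
      push_neg at h
      have h2 := mul_le_mul h h hs2pos.le (by linarith)
      nlinarith [h2, hs2, hc0sq]
    have h2s0 : 2 * s0 ≤ δ := by linarith
    have mem1 : ((2 * a, -(2 * c0)) : ℝ × ℝ) ∈ Set.Ico 0 (2 * π) ×ˢ Set.Icc (-δ) δ := by
      simp only [Set.mem_prod, Set.mem_Ico, Set.mem_Icc]
      refine ⟨⟨by linarith, by linarith⟩, by linarith, by linarith⟩
    have mem2 : ((π - 2 * a, -(2 * s0)) : ℝ × ℝ) ∈ Set.Ico 0 (2 * π) ×ˢ Set.Icc (-δ) δ := by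
      simp only [Set.mem_prod, Set.mem_Ico, Set.mem_Icc]
      refine ⟨⟨by linarith, by linarith⟩, by linarith, by linarith⟩
    have hcos2a : Real.cos (2 * a) = 2 * c0 ^ 2 - 1 := Real.cos_two_mul a
    have hsin2a : Real.sin (2 * a) = 2 * s0 * c0 := by
      rw [Real.sin_two_mul, hsin]
    have himg : w (2 * a, -(2 * c0)) = w (π - 2 * a, -(2 * s0)) := by
      rw [hw, hw]
      have e1 : (2 * a) / 2 = a := by ring
      have e2 : (π - 2 * a) / 2 = π / 2 - a := by ring
      rw [e1, e2, Real.cos_pi_sub, Real.sin_pi_sub, Real.cos_pi_div_two_sub,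
        Real.sin_pi_div_two_sub, hsin, hcos2a, hsin2a]
      refine Prod.ext ?_ (Prod.ext ?_ ?_)
      · simp only
        linear_combination 2 * hpyth
      · simp only
        ring
      · simp only
        ring
    have := hinj mem1 mem2 himg
    rw [Prod.mk.injEq] at this
    have ha4 : a = π / 4 := by linarith [this.1]
    have : s0 = Real.sqrt 2 / 2 := by
      rw [← hsin, ha4, Real.sin_pi_div_four]
    linarith
  · -- δ ≤ √2 → injective
    intro hle
    rintro ⟨t, r⟩ hmem ⟨t', r'⟩ hmem' heq
    simp only [Set.mem_prod, Set.mem_Ico, Set.mem_Icc] at hmem hmem'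
    obtain ⟨⟨ht0, ht2⟩, hrl, hru⟩ := hmem
    obtain ⟨⟨ht0', ht2'⟩, hrl', hru'⟩ := hmem'
    rw [hw, hw] at heq
    simp only [Prod.mk.injEq] at heq
    obtain ⟨e1, e2, e3⟩ := heq
    have hP1 : Real.sin (t / 2) ^ 2 + Real.cos (t / 2) ^ 2 = 1 := Real.sin_sq_add_cos_sq _
    have hP1' : Real.sin (t' / 2) ^ 2 + Real.cos (t' / 2) ^ 2 = 1 := Real.sin_sq_add_cos_sq _
    have hct : Real.cos t = 2 * Real.cos (t / 2) ^ 2 - 1 := by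
      have := Real.cos_two_mul (t / 2); rw [show 2 * (t / 2) = t by ring] at this; exact this
    have hct' : Real.cos t' = 2 * Real.cos (t' / 2) ^ 2 - 1 := by
      have := Real.cos_two_mul (t' / 2); rw [show 2 * (t' / 2) = t' by ring] at this; exact this
    have hst : Real.sin t = 2 * Real.sin (t / 2) * Real.cos (t / 2) := by
      have := Real.sin_two_mul (t / 2); rw [show 2 * (t / 2) = t by ring] at this; exact this
    have hst' : Real.sin t' = 2 * Real.sin (t' / 2) * Real.cos (t' / 2) := by
      have := Real.sin_two_mul (t' / 2); rw [show 2 * (t' / 2) = t' by ring] at this; exact this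
    rw [hct, hct'] at e1
    rw [hst, hst'] at e2
    set s : ℝ := Real.sin (t / 2) with hsdef
    set c : ℝ := Real.cos (t / 2) with hcdef
    set s' : ℝ := Real.sin (t' / 2) with hs'def
    set c' : ℝ := Real.cos (t' / 2) with hc'def
    have hsnn : 0 ≤ s := Real.sin_nonneg_of_nonneg_of_le_pi (by linarith) (by linarith)
    have hsnn' : 0 ≤ s' := Real.sin_nonneg_of_nonneg_of_le_pi (by linarith) (by linarith)
    have e4 : s * c = s' * c' := by linarith
    have hrsq : r ^ 2 ≤ 2 := by
      have h := mul_nonneg (by linarith : (0:ℝ) ≤ Real.sqrt 2 - r)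
        (by linarith : (0:ℝ) ≤ Real.sqrt 2 + r)
      linarith [h, hs2, sq_nonneg r, sq_abs r, abs_nonneg r,
        (by ring : (Real.sqrt 2 - r) * (Real.sqrt 2 + r) = Real.sqrt 2 ^ 2 - r ^ 2)]
    have hrsq' : r' ^ 2 ≤ 2 := by
      have h := mul_nonneg (by linarith : (0:ℝ) ≤ Real.sqrt 2 - r')
        (by linarith : (0:ℝ) ≤ Real.sqrt 2 + r')
      linarith [h, hs2,
        (by ring : (Real.sqrt 2 - r') * (Real.sqrt 2 + r') = Real.sqrt 2 ^ 2 - r' ^ 2)]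
    -- key dichotomy
    have habs : s = s' ∨ s ^ 2 + s' ^ 2 = 1 := by
      have hfac : (s - s') * ((s + s') * (1 - s ^ 2 - s' ^ 2)) = 0 := by
        have h4sq : (s * c) ^ 2 = (s' * c') ^ 2 := by rw [e4]
        linear_combination h4sq - s ^ 2 * hP1 + s' ^ 2 * hP1'
      rcases mul_eq_zero.1 hfac with h | h
      · left; linarith
      · rcases mul_eq_zero.1 h with h | h
        · left; linarith
        · right; linarith
    have hcc : c = c' := by
      by_cases hss : s = s'
      · by_cases hs0 : s = 0
        · have htz : t = 0 := by
            by_contra h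
            have h1 : 0 < t / 2 := by
              rcases lt_or_eq_of_le ht0 with h' | h'
              · linarith
              · exact absurd h'.symm h
            have := Real.sin_pos_of_pos_of_lt_pi h1 (by linarith)
            rw [← hsdef] at this; linarith
          have htz' : t' = 0 := by
            by_contra h
            have h1 : 0 < t' / 2 := by
              rcases lt_or_eq_of_le ht0' with h' | h'
              · linarith
              · exact absurd h'.symm h
            have := Real.sin_pos_of_pos_of_lt_pi h1 (by linarith)
            rw [← hs'def] at this
            rw [hss] at hs0; linarith
          rw [hcdef, hc'def, htz, htz']
        · have h1 : s * c = s * c' := by rw [e4, ← hss]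
          exact mul_left_cancel₀ hs0 h1
      · exfalso
        rcases habs with h | hB
        · exact hss h
        have hcsq : c ^ 2 = s' ^ 2 := by linarith
        have hc'sq : c' ^ 2 = s ^ 2 := by linarith
        by_cases hs'0 : s' = 0
        · -- then s² = 1, c = 0, r = 0, r'c' = -2
          have hsq1 : s ^ 2 = 1 := by rw [hs'0] at hB; linarith
          have hc0 : c = 0 := by
            have : c ^ 2 = 0 := by rw [hcsq, hs'0]; ring
            exact pow_eq_zero_iff (by norm_num) |>.1 this
          have hsne : s ≠ 0 := by intro h; rw [h] at hsq1; norm_num at hsq1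
          have hr0 : r = 0 := by
            have : r * s = 0 := by rw [e3, hs'0]; ring
            exact (mul_eq_zero.1 this).resolve_right hsne
          rw [hc0, hr0] at e1
          norm_num at e1
          have hc'1 : c' ^ 2 = 1 := by rw [hc'sq, hsq1]
          have hrc : r' * c' = -2 := by linarith [e1, hc'1]
          have h4 : r' ^ 2 * c' ^ 2 = 4 := by
            have : (r' * c') ^ 2 = 4 := by rw [hrc]; norm_num
            linear_combination this
          rw [hc'1, mul_one] at h4
          linarith [h4, hrsq']
        by_cases hs0 : s = 0
        · have hsq1 : s' ^ 2 = 1 := by rw [hs0] at hB; linarith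
          have hc0 : c' = 0 := by
            have : c' ^ 2 = 0 := by rw [hc'sq, hs0]; ring
            exact pow_eq_zero_iff (by norm_num) |>.1 this
          have hr0 : r' = 0 := by
            have : r' * s' = 0 := by rw [← e3, hs0]; ring
            exact (mul_eq_zero.1 this).resolve_right hs'0
          rw [hc0, hr0] at e1
          norm_num at e1
          have hc1 : c ^ 2 = 1 := by rw [hcsq, hsq1]
          have hrc : r * c = -2 := by linarith [e1, hc1]
          have h4 : r ^ 2 * c ^ 2 = 4 := by
            have : (r * c) ^ 2 = 4 := by rw [hrc]; norm_num
            linear_combination this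
          rw [hc1, mul_one] at h4
          linarith [h4, hrsq]
        -- main case: s ≠ 0, s' ≠ 0
        have hspos : 0 < s := lt_of_le_of_ne hsnn (Ne.symm hs0)
        have hs'pos : 0 < s' := lt_of_le_of_ne hsnn' (Ne.symm hs'0)
        have hDne : s' ^ 2 - s ^ 2 ≠ 0 := by
          intro h
          have : (s' - s) * (s' + s) = 0 := by linear_combination h
          rcases mul_eq_zero.1 this with h' | h'
          · exact hss (by linarith)
          · linarith
        have step1 : r' * c' * (c * s') = r * s ^ 2 * s' := by
          calc r' * c' * (c * s') = r' * c * (c' * s') := by ring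
            _ = r' * c * (c * s) := by rw [show c' * s' = c * s by linear_combination -e4]
            _ = r' * s * c ^ 2 := by ring
            _ = r' * s * s' ^ 2 := by rw [hcsq]
            _ = (r' * s') * (s * s') := by ring
            _ = (r * s) * (s * s') := by rw [← e3]
            _ = r * s ^ 2 * s' := by ring
        have hfac1 : (r + 2 * c) * (s' * (s' ^ 2 - s ^ 2)) = 0 := by
          linear_combination (c * s') * e1 + step1 - (2 * c * s' + r * s') * hcsq
            + 2 * c * s' * hc'sq
        have hr : r = -2 * c := by
          rcases mul_eq_zero.1 hfac1 with h | h
          · linarith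
          · exact absurd h (mul_ne_zero (by linarith) hDne)
        have step1' : r * c * (c' * s) = r' * s' ^ 2 * s := by
          calc r * c * (c' * s) = r * c' * (c * s) := by ring
            _ = r * c' * (c' * s') := by rw [show c * s = c' * s' by linear_combination e4]
            _ = r * s' * c' ^ 2 := by ring
            _ = r * s' * s ^ 2 := by rw [hc'sq]
            _ = (r * s) * (s' * s) := by ring
            _ = (r' * s') * (s' * s) := by rw [e3]
            _ = r' * s' ^ 2 * s := by ring
        have hfac1' : (r' + 2 * c') * (s * (s ^ 2 - s' ^ 2)) = 0 := by
          linear_combination (-(c' * s)) * e1 + step1' - (2 * c' * s + r' * s) * hc'sq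
            + 2 * c' * s * hcsq
        have hr' : r' = -2 * c' := by
          rcases mul_eq_zero.1 hfac1' with h | h
          · linarith
          · refine absurd h (mul_ne_zero (by linarith) ?_)
            intro h'; exact hDne (by linarith)
        have h1 : s' ^ 2 ≤ 1 / 2 := by
          have hx : r ^ 2 = 4 * s' ^ 2 := by rw [hr]; linear_combination 4 * hcsq
          linarith [hx, hrsq]
        have h2 : s ^ 2 ≤ 1 / 2 := by
          have hx : r' ^ 2 = 4 * s ^ 2 := by rw [hr']; linear_combination 4 * hc'sq
          linarith [hx, hrsq']
        have h3 : s ^ 2 = s' ^ 2 := by linarith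
        have : (s - s') * (s + s') = 0 := by linear_combination h3
        rcases mul_eq_zero.1 this with h | h
        · exact hss (by linarith)
        · linarith
    have htt : t = t' := by
      have h1 : t / 2 ∈ Set.Icc 0 π := ⟨by linarith, by linarith⟩
      have h2 : t' / 2 ∈ Set.Icc 0 π := ⟨by linarith, by linarith⟩
      have := Real.injOn_cos h1 h2 hcc
      linarith
    subst htt
    have hcc' : c = c' := hcc
    have hss2 : s = s' := rfl
    have hrr : r = r' := by
      have e1' : r * c = r' * c := by
        rw [← hcc'] at e1
        linarith [e1]
      have e3' : r * s = r' * s := by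
        rw [← hss2] at e3
        exact e3
      linear_combination c * e1' + s * e3' - (r - r') * hP1
    rw [hrr]
end

section
/- Let δ > 0 be real, P_δ := [0,2π) × [-δ,δ], w(t,r) := (cos t + r·cos(t/2), sin t + r·sin(t/2), r·sin(t/2)), c_δ := min(1, max(δ,√2)/2), and s_δ := 2·c_δ·√(1 - c_δ²). For points p₁ = (t₁,r₁) and p₂ = (t₂,r₂) in [0,2π) × ℝ, one has (p₁ ∈ P_δ, p₂ ∈ P_δ, p₁ ≠ p₂, and w(p₁) = w(p₂)) if and only if there exists k ∈ {0,1} such that t₂ = (2k+1)π − t₁, r₁ = −2·cos(t₁/2), r₂ = (−1)^{k+1}·2·sin(t₁/2), and s_δ ≤ |sin t₁| < 1. -/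
open Real Set

lemma mob_c_facts (δ c : ℝ) (hc : c = min 1 (max δ (Real.sqrt 2) / 2)) :
    Real.sqrt 2 / 2 ≤ c ∧ c ≤ 1 := by
  have hsq : Real.sqrt 2 ^ 2 = 2 := Real.sq_sqrt (by norm_num)
  have h0 : 0 ≤ Real.sqrt 2 := Real.sqrt_nonneg 2
  have h1 : (1:ℝ) ≤ Real.sqrt 2 := by nlinarith
  have h2 : Real.sqrt 2 ≤ 2 := by nlinarith
  constructor
  · rw [hc]
    apply le_min (by linarith)
    have : Real.sqrt 2 ≤ max δ (Real.sqrt 2) := le_max_right _ _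
    linarith
  · rw [hc]; exact min_le_left _ _

lemma mob_bound_fwd (δ c s x y : ℝ) (hδ : 0 < δ)
    (hc : c = min 1 (max δ (Real.sqrt 2) / 2)) (hs : s = 2 * c * Real.sqrt (1 - c ^ 2))
    (hx : 0 ≤ x) (hy : 0 ≤ y) (hxy : x ^ 2 + y ^ 2 = 1)
    (h1 : 2 * x ≤ δ) (h2 : 2 * y ≤ δ) : s ≤ 2 * (x * y) := by
  obtain ⟨hcl, hcu⟩ := mob_c_facts δ c hc
  have hsq : Real.sqrt 2 ^ 2 = 2 := Real.sq_sqrt (by norm_num)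
  have h0 : 0 ≤ Real.sqrt 2 := Real.sqrt_nonneg 2
  have hc0 : 0 ≤ c := by nlinarith
  have hc2 : 1 ≤ 2 * c ^ 2 := by nlinarith
  have h1c : 0 ≤ 1 - c ^ 2 := by nlinarith
  have hss : s ^ 2 = 4 * c ^ 2 * (1 - c ^ 2) := by
    rw [hs, mul_pow, mul_pow, Real.sq_sqrt h1c]; ring
  have hs0 : 0 ≤ s := by
    rw [hs]; exact mul_nonneg (by linarith) (Real.sqrt_nonneg _)
  have hxc : x ≤ c := by
    rw [hc]
    refine le_min (by nlinarith) ?_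
    have : δ ≤ max δ (Real.sqrt 2) := le_max_left _ _
    linarith
  have hyc : y ≤ c := by
    rw [hc]
    refine le_min (by nlinarith) ?_
    have : δ ≤ max δ (Real.sqrt 2) := le_max_left _ _
    linarith
  have hx2 : x ^ 2 ≤ c ^ 2 := by nlinarith
  have hy2 : y ^ 2 ≤ c ^ 2 := by nlinarith
  have key : s ^ 2 ≤ (2 * (x * y)) ^ 2 := by nlinarith [hx2, hy2, hc2, hss, hxy]
  have h2xy : 0 ≤ 2 * (x * y) := by positivity
  have := Real.sqrt_le_sqrt key
  rwa [Real.sqrt_sq hs0, Real.sqrt_sq h2xy] at this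

lemma mob_bound_bwd (δ c s x y : ℝ) (hδ : 0 < δ)
    (hc : c = min 1 (max δ (Real.sqrt 2) / 2)) (hs : s = 2 * c * Real.sqrt (1 - c ^ 2))
    (hx : 0 ≤ x) (hy : 0 ≤ y) (hxy : x ^ 2 + y ^ 2 = 1)
    (h1 : s ≤ 2 * (x * y)) (h2 : 2 * (x * y) < 1) : 2 * x ≤ δ ∧ 2 * y ≤ δ := by
  have hsq : Real.sqrt 2 ^ 2 = 2 := Real.sq_sqrt (by norm_num)
  have h0 : 0 ≤ Real.sqrt 2 := Real.sqrt_nonneg 2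
  rcases le_or_gt (Real.sqrt 2) δ with hδ2 | hδ2
  · obtain ⟨hcl, hcu⟩ := mob_c_facts δ c hc
    have hcδ : c ≤ δ / 2 := by
      rw [hc, max_eq_left hδ2]; exact min_le_right _ _
    have hc0 : 0 ≤ c := by nlinarith
    have hc2 : 1 ≤ 2 * c ^ 2 := by nlinarith
    have h1c : 0 ≤ 1 - c ^ 2 := by nlinarith
    have hss : s ^ 2 = 4 * c ^ 2 * (1 - c ^ 2) := by
      rw [hs, mul_pow, mul_pow, Real.sq_sqrt h1c]; ring
    have hs0 : 0 ≤ s := by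
      rw [hs]; exact mul_nonneg (by linarith) (Real.sqrt_nonneg _)
    have hyx : y ^ 2 = 1 - x ^ 2 := by linarith
    have hxy' : x ^ 2 = 1 - y ^ 2 := by linarith
    have key : s ^ 2 ≤ (2 * (x * y)) ^ 2 := by nlinarith [mul_nonneg hx hy]
    have e1 : (2 * (x * y)) ^ 2 = 4 * x ^ 2 * (1 - x ^ 2) := by rw [← hyx]; ring
    have e2 : (2 * (x * y)) ^ 2 = 4 * y ^ 2 * (1 - y ^ 2) := by rw [← hxy']; ring
    have hk1 : 4 * c ^ 2 * (1 - c ^ 2) ≤ 4 * x ^ 2 * (1 - x ^ 2) := by linarith [key, hss, e1]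
    have hk2 : 4 * c ^ 2 * (1 - c ^ 2) ≤ 4 * y ^ 2 * (1 - y ^ 2) := by linarith [key, hss, e2]
    have hx2 : x ^ 2 ≤ c ^ 2 := by nlinarith [hk1, hc2]
    have hy2 : y ^ 2 ≤ c ^ 2 := by nlinarith [hk2, hc2]
    have hxc : x ≤ c := by
      have := Real.sqrt_le_sqrt hx2
      rwa [Real.sqrt_sq hx, Real.sqrt_sq hc0] at this
    have hyc : y ≤ c := by
      have := Real.sqrt_le_sqrt hy2
      rwa [Real.sqrt_sq hy, Real.sqrt_sq hc0] at this
    constructor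
    · linarith
    · linarith
  · exfalso
    have hcc : c = Real.sqrt 2 / 2 := by
      rw [hc, max_eq_right hδ2.le, min_eq_right (by nlinarith)]
    have hs1 : s = 1 := by
      rw [hs, hcc, show 1 - (Real.sqrt 2 / 2) ^ 2 = 1/2 by rw [div_pow, hsq]; norm_num]
      rw [show 2 * (Real.sqrt 2 / 2) = Real.sqrt 2 by ring,
        ← Real.sqrt_mul (by norm_num : (0:ℝ) ≤ 2)]
      norm_num
    nlinarith [hxy, h1, h2, hs1]

lemma mob_cos_zero {t : ℝ} (h0 : 0 ≤ t) (h2 : t < 2 * π) (hc : Real.cos t = 0) :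
    t = π / 2 ∨ t = 3 * π / 2 := by
  obtain ⟨j, hj⟩ := Real.cos_eq_zero_iff.mp hc
  have hπ := Real.pi_pos
  have hb1 : (0:ℝ) ≤ 2 * j + 1 := by nlinarith [hj ▸ h0]
  have hb2 : (2 * j + 1 : ℝ) < 4 := by nlinarith [hj ▸ h2]
  have hb1' : (0:ℤ) ≤ 2 * j + 1 := by exact_mod_cast hb1
  have hb2' : (2 * j + 1 : ℤ) < 4 := by exact_mod_cast hb2
  have : j = 0 ∨ j = 1 := by omega
  rcases this with rfl | rfl
  · left; rw [hj]; push_cast; ring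
  · right; rw [hj]; push_cast; ring

set_option maxHeartbeats 1600000 in
theorem simple_mobius_glued_pairs (δ : ℝ) (hδ : 0 < δ)
    (w : ℝ × ℝ → ℝ × ℝ × ℝ)
    (hw : ∀ t r : ℝ, w (t, r) =
      (Real.cos t + r * Real.cos (t / 2),
       Real.sin t + r * Real.sin (t / 2),
       r * Real.sin (t / 2)))
    (P : Set (ℝ × ℝ)) (hP : P = Set.Ico 0 (2 * π) ×ˢ Set.Icc (-δ) δ)
    (c s : ℝ) (hc : c = min 1 (max δ (Real.sqrt 2) / 2))
    (hs : s = 2 * c * Real.sqrt (1 - c ^ 2))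
    (t₁ r₁ t₂ r₂ : ℝ)
    (ht₁ : t₁ ∈ Set.Ico 0 (2 * π)) (ht₂ : t₂ ∈ Set.Ico 0 (2 * π)) :
    ((t₁, r₁) ∈ P ∧ (t₂, r₂) ∈ P ∧ (t₁, r₁) ≠ (t₂, r₂) ∧ w (t₁, r₁) = w (t₂, r₂)) ↔
      ∃ k : ℕ, (k = 0 ∨ k = 1) ∧
        t₂ = (2 * k + 1) * π - t₁ ∧
        r₁ = -2 * Real.cos (t₁ / 2) ∧
        r₂ = (-1 : ℝ) ^ (k + 1) * 2 * Real.sin (t₁ / 2) ∧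
        s ≤ |Real.sin t₁| ∧ |Real.sin t₁| < 1 := by
  have hπ := Real.pi_pos
  obtain ⟨ht₁0, ht₁2⟩ := ht₁
  obtain ⟨ht₂0, ht₂2⟩ := ht₂
  have pyth := Real.sin_sq_add_cos_sq (t₁ / 2)
  have hcos1 : Real.cos t₁ = 2 * Real.cos (t₁ / 2) ^ 2 - 1 := by
    have h := Real.cos_two_mul (t₁ / 2)
    rw [show 2 * (t₁ / 2) = t₁ by ring] at h
    exact h
  have hsin1 : Real.sin t₁ = 2 * Real.sin (t₁ / 2) * Real.cos (t₁ / 2) := by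
    have h := Real.sin_two_mul (t₁ / 2)
    rw [show 2 * (t₁ / 2) = t₁ by ring] at h
    exact h
  have habs : |Real.sin t₁| = 2 * (|Real.cos (t₁ / 2)| * |Real.sin (t₁ / 2)|) := by
    rw [hsin1, abs_mul, abs_mul, abs_two]; ring
  have hxy : |Real.cos (t₁ / 2)| ^ 2 + |Real.sin (t₁ / 2)| ^ 2 = 1 := by
    rw [sq_abs, sq_abs]; linarith
  have hs32 : Real.sin (3 * π / 2) = -1 := by
    rw [show 3 * π / 2 = π + π / 2 by ring, Real.sin_add, Real.sin_pi, Real.cos_pi,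
      Real.sin_pi_div_two, Real.cos_pi_div_two]
    ring
  have hc32 : Real.cos (3 * π / 2) = 0 := by
    rw [show 3 * π / 2 = π + π / 2 by ring, Real.cos_add, Real.sin_pi, Real.cos_pi,
      Real.sin_pi_div_two, Real.cos_pi_div_two]
    ring
  constructor
  · rintro ⟨hm1, hm2, hne, hweq⟩
    rw [hP] at hm1 hm2
    have hr1m : r₁ ∈ Set.Icc (-δ) δ := hm1.2
    have hr2m : r₂ ∈ Set.Icc (-δ) δ := hm2.2
    rw [hw t₁ r₁, hw t₂ r₂] at hweq
    simp only [Prod.mk.injEq] at hweq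
    obtain ⟨e1, e2, e3⟩ := hweq
    have hsins : Real.sin t₁ = Real.sin t₂ := by linarith
    rcases Real.sin_eq_sin_iff.mp hsins with ⟨k, hk | hk⟩
    · -- t₂ = 2kπ + t₁ : impossible
      exfalso
      have hk0 : t₂ = t₁ := by
        have l1 : (-1:ℝ) < k := by nlinarith
        have l2 : (k:ℝ) < 1 := by nlinarith
        have l1' : (-1:ℤ) < k := by exact_mod_cast l1
        have l2' : (k:ℤ) < 1 := by exact_mod_cast l2
        have : k = 0 := by omega
        rw [hk, this]; push_cast; ring
      subst hk0
      apply hne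
      by_cases hs10 : Real.sin (t₂ / 2) = 0
      · have ht10 : t₂ / 2 = 0 := by
          rw [← Real.sin_eq_zero_iff_of_lt_of_lt (by linarith) (by linarith)]
          exact hs10
        have ht1 : t₂ = 0 := by linarith
        subst ht1
        norm_num at e1
        rw [e1]
      · have : r₁ = r₂ := mul_right_cancel₀ hs10 e3
        rw [this]
    · -- t₂ = (2k+1)π - t₁
      have hkk : k = 0 ∨ k = 1 := by
        have l1 : (0:ℝ) ≤ 2 * k + 1 := by nlinarith
        have l2 : (2 * (k:ℝ) + 1) < 4 := by nlinarith
        have l1' : (0:ℤ) ≤ 2 * k + 1 := by exact_mod_cast l1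
        have l2' : (2 * k + 1 : ℤ) < 4 := by exact_mod_cast l2
        omega
      have habs1 : |r₁| ≤ δ := abs_le.mpr ⟨hr1m.1, hr1m.2⟩
      have habs2 : |r₂| ≤ δ := abs_le.mpr ⟨hr2m.1, hr2m.2⟩
      rcases hkk with rfl | rfl
      · -- k = 0 : t₂ = π - t₁
        have ht2e : t₂ = π - t₁ := by rw [hk]; push_cast; ring
        have hss2 : Real.sin (t₂ / 2) = Real.cos (t₁ / 2) := by
          rw [ht2e, show (π - t₁) / 2 = π / 2 - t₁ / 2 by ring, Real.sin_pi_div_two_sub]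
        have hcc2 : Real.cos (t₂ / 2) = Real.sin (t₁ / 2) := by
          rw [ht2e, show (π - t₁) / 2 = π / 2 - t₁ / 2 by ring, Real.cos_pi_div_two_sub]
        have hct2 : Real.cos t₂ = -Real.cos t₁ := by rw [ht2e, Real.cos_pi_sub]
        rw [hss2] at e3
        rw [hcc2, hct2] at e1
        have hC : Real.cos t₁ ≠ 0 := by
          intro hC0
          rcases mob_cos_zero ht₁0 ht₁2 hC0 with h | h
          · apply hne
            have ht2eq : t₂ = t₁ := by rw [ht2e, h]; ring
            have hv : Real.sin (t₁ / 2) = Real.cos (t₁ / 2) := by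
              rw [h, show π / 2 / 2 = π / 4 by ring, Real.sin_pi_div_four, Real.cos_pi_div_four]
            have hvne : Real.cos (t₁ / 2) ≠ 0 := by
              rw [h, show π / 2 / 2 = π / 4 by ring, Real.cos_pi_div_four]
              positivity
            have : r₁ = r₂ := by
              rw [hv] at e3
              exact mul_right_cancel₀ hvne e3
            rw [ht2eq, this]
          · rw [ht2e, h] at ht₂0
            linarith
        have hr1e : r₁ = -2 * Real.cos (t₁ / 2) := by
          have h1 : r₁ * Real.cos t₁ = -2 * Real.cos (t₁ / 2) * Real.cos t₁ := by
            linear_combination Real.cos (t₁ / 2) * e1 - Real.sin (t₁ / 2) * e3 +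
              r₁ * hcos1 + r₁ * pyth
          exact mul_right_cancel₀ hC h1
        have hr2e : r₂ = -2 * Real.sin (t₁ / 2) := by
          have h1 : r₂ * Real.cos t₁ = -2 * Real.sin (t₁ / 2) * Real.cos t₁ := by
            linear_combination Real.sin (t₁ / 2) * e1 - Real.cos (t₁ / 2) * e3 +
              r₂ * hcos1 + r₂ * pyth
          exact mul_right_cancel₀ hC h1
        have hb1 : 2 * |Real.cos (t₁ / 2)| ≤ δ := by
          rw [hr1e, abs_mul] at habs1
          norm_num at habs1
          linarith
        have hb2 : 2 * |Real.sin (t₁ / 2)| ≤ δ := by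
          rw [hr2e, abs_mul] at habs2
          norm_num at habs2
          linarith
        have hfwd := mob_bound_fwd δ c s _ _ hδ hc hs (abs_nonneg (Real.cos (t₁ / 2)))
          (abs_nonneg (Real.sin (t₁ / 2))) hxy hb1 hb2
        have hC2 : 0 < Real.cos t₁ ^ 2 := by
          rw [← sq_abs]; exact pow_pos (abs_pos.mpr hC) 2
        have hlt : |Real.sin t₁| < 1 := by
          have h1 : Real.sin t₁ ^ 2 < 1 := by linarith [Real.sin_sq_add_cos_sq t₁]
          exact (sq_lt_one_iff_abs_lt_one _).mp h1
        refine ⟨0, Or.inl rfl, ?_, hr1e, ?_, ?_, hlt⟩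
        · push_cast; linarith [ht2e]
        · rw [hr2e]; norm_num
        · rw [habs]; exact hfwd
      · -- k = 1 : t₂ = 3π - t₁
        have ht2e : t₂ = 3 * π - t₁ := by rw [hk]; push_cast; ring
        have hss2 : Real.sin (t₂ / 2) = -Real.cos (t₁ / 2) := by
          rw [ht2e, show (3 * π - t₁) / 2 = 3 * π / 2 - t₁ / 2 by ring, Real.sin_sub,
            hs32, hc32]
          ring
        have hcc2 : Real.cos (t₂ / 2) = -Real.sin (t₁ / 2) := by
          rw [ht2e, show (3 * π - t₁) / 2 = 3 * π / 2 - t₁ / 2 by ring, Real.cos_sub,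
            hs32, hc32]
          ring
        have hct2 : Real.cos t₂ = -Real.cos t₁ := by
          rw [ht2e, show 3 * π - t₁ = π - t₁ + 2 * π by ring, Real.cos_add_two_pi,
            Real.cos_pi_sub]
        rw [hss2] at e3
        rw [hcc2, hct2] at e1
        have hC : Real.cos t₁ ≠ 0 := by
          intro hC0
          rcases mob_cos_zero ht₁0 ht₁2 hC0 with h | h
          · rw [ht2e, h] at ht₂2
            linarith
          · apply hne
            have ht2eq : t₂ = t₁ := by rw [ht2e, h]; ring
            have hv : Real.sin (t₁ / 2) = -Real.cos (t₁ / 2) := by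
              rw [h, show 3 * π / 2 / 2 = π - π / 4 by ring, Real.sin_pi_sub,
                Real.cos_pi_sub, Real.sin_pi_div_four, Real.cos_pi_div_four]
              ring
            have hvne : -Real.cos (t₁ / 2) ≠ 0 := by
              rw [h, show 3 * π / 2 / 2 = π - π / 4 by ring, Real.cos_pi_sub,
                Real.cos_pi_div_four]
              simp only [neg_neg, ne_eq]
              positivity
            have : r₁ = r₂ := by
              rw [hv] at e3
              exact mul_right_cancel₀ hvne e3
            rw [ht2eq, this]
        have hr1e : r₁ = -2 * Real.cos (t₁ / 2) := by
          have h1 : r₁ * Real.cos t₁ = -2 * Real.cos (t₁ / 2) * Real.cos t₁ := by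
            linear_combination Real.cos (t₁ / 2) * e1 - Real.sin (t₁ / 2) * e3 +
              r₁ * hcos1 + r₁ * pyth
          exact mul_right_cancel₀ hC h1
        have hr2e : r₂ = 2 * Real.sin (t₁ / 2) := by
          have h1 : r₂ * Real.cos t₁ = 2 * Real.sin (t₁ / 2) * Real.cos t₁ := by
            linear_combination Real.cos (t₁ / 2) * e3 - Real.sin (t₁ / 2) * e1 +
              r₂ * hcos1 + r₂ * pyth
          exact mul_right_cancel₀ hC h1
        have hb1 : 2 * |Real.cos (t₁ / 2)| ≤ δ := by
          rw [hr1e, abs_mul] at habs1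
          norm_num at habs1
          linarith
        have hb2 : 2 * |Real.sin (t₁ / 2)| ≤ δ := by
          rw [hr2e, abs_mul] at habs2
          norm_num at habs2
          linarith
        have hfwd := mob_bound_fwd δ c s _ _ hδ hc hs (abs_nonneg (Real.cos (t₁ / 2)))
          (abs_nonneg (Real.sin (t₁ / 2))) hxy hb1 hb2
        have hC2 : 0 < Real.cos t₁ ^ 2 := by
          rw [← sq_abs]; exact pow_pos (abs_pos.mpr hC) 2
        have hlt : |Real.sin t₁| < 1 := by
          have h1 : Real.sin t₁ ^ 2 < 1 := by linarith [Real.sin_sq_add_cos_sq t₁]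
          exact (sq_lt_one_iff_abs_lt_one _).mp h1
        refine ⟨1, Or.inr rfl, ?_, hr1e, ?_, ?_, hlt⟩
        · push_cast; linarith [ht2e]
        · rw [hr2e]; norm_num
        · rw [habs]; exact hfwd
  · rintro ⟨k, hk01, ht2e, hr1e, hr2e, hsge, hslt⟩
    have hb := mob_bound_bwd δ c s _ _ hδ hc hs (abs_nonneg (Real.cos (t₁ / 2)))
      (abs_nonneg (Real.sin (t₁ / 2))) hxy (by rw [← habs]; exact hsge)
      (by rw [← habs]; exact hslt)
    obtain ⟨hbc, hbs⟩ := hb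
    have hr1m : r₁ ∈ Set.Icc (-δ) δ := by
      have h1 : |r₁| ≤ δ := by
        rw [hr1e, abs_mul]; simpa using hbc
      exact Set.mem_Icc.mpr (abs_le.mp h1)
    rcases hk01 with rfl | rfl
    · -- k = 0
      have ht2 : t₂ = π - t₁ := by rw [ht2e]; push_cast; ring
      have hr2 : r₂ = -2 * Real.sin (t₁ / 2) := by rw [hr2e]; norm_num
      have hr2m : r₂ ∈ Set.Icc (-δ) δ := by
        have h1 : |r₂| ≤ δ := by
          rw [hr2, abs_mul]; simpa using hbs
        exact Set.mem_Icc.mpr (abs_le.mp h1)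
      have hss2 : Real.sin (t₂ / 2) = Real.cos (t₁ / 2) := by
        rw [ht2, show (π - t₁) / 2 = π / 2 - t₁ / 2 by ring, Real.sin_pi_div_two_sub]
      have hcc2 : Real.cos (t₂ / 2) = Real.sin (t₁ / 2) := by
        rw [ht2, show (π - t₁) / 2 = π / 2 - t₁ / 2 by ring, Real.cos_pi_div_two_sub]
      have hct2 : Real.cos t₂ = -Real.cos t₁ := by rw [ht2, Real.cos_pi_sub]
      have hst2 : Real.sin t₂ = Real.sin t₁ := by rw [ht2, Real.sin_pi_sub]
      refine ⟨?_, ?_, ?_, ?_⟩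
      · rw [hP]; exact Set.mk_mem_prod ⟨ht₁0, ht₁2⟩ hr1m
      · rw [hP]; exact Set.mk_mem_prod ⟨ht₂0, ht₂2⟩ hr2m
      · intro hEq
        have hteq : t₁ = t₂ := congrArg Prod.fst hEq
        have ht1v : t₁ = π / 2 := by rw [ht2] at hteq; linarith
        rw [ht1v, Real.sin_pi_div_two] at hslt
        norm_num at hslt
      · rw [hw t₁ r₁, hw t₂ r₂]
        simp only [Prod.mk.injEq]
        refine ⟨?_, ?_, ?_⟩
        · rw [hct2, hcc2, hr1e, hr2]
          linear_combination 2 * hcos1 + 2 * pyth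
        · rw [hst2, hss2, hr1e, hr2]; ring
        · rw [hss2, hr1e, hr2]; ring
    · -- k = 1
      have ht2 : t₂ = 3 * π - t₁ := by rw [ht2e]; push_cast; ring
      have hr2 : r₂ = 2 * Real.sin (t₁ / 2) := by rw [hr2e]; norm_num
      have hr2m : r₂ ∈ Set.Icc (-δ) δ := by
        have h1 : |r₂| ≤ δ := by
          rw [hr2, abs_mul]; simpa using hbs
        exact Set.mem_Icc.mpr (abs_le.mp h1)
      have hss2 : Real.sin (t₂ / 2) = -Real.cos (t₁ / 2) := by
        rw [ht2, show (3 * π - t₁) / 2 = 3 * π / 2 - t₁ / 2 by ring, Real.sin_sub, hs32, hc32]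
        ring
      have hcc2 : Real.cos (t₂ / 2) = -Real.sin (t₁ / 2) := by
        rw [ht2, show (3 * π - t₁) / 2 = 3 * π / 2 - t₁ / 2 by ring, Real.cos_sub, hs32, hc32]
        ring
      have hct2 : Real.cos t₂ = -Real.cos t₁ := by
        rw [ht2, show 3 * π - t₁ = π - t₁ + 2 * π by ring, Real.cos_add_two_pi, Real.cos_pi_sub]
      have hst2 : Real.sin t₂ = Real.sin t₁ := by
        rw [ht2, show 3 * π - t₁ = π - t₁ + 2 * π by ring, Real.sin_add_two_pi, Real.sin_pi_sub]
      refine ⟨?_, ?_, ?_, ?_⟩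
      · rw [hP]; exact Set.mk_mem_prod ⟨ht₁0, ht₁2⟩ hr1m
      · rw [hP]; exact Set.mk_mem_prod ⟨ht₂0, ht₂2⟩ hr2m
      · intro hEq
        have hteq : t₁ = t₂ := congrArg Prod.fst hEq
        have ht1v : t₁ = 3 * π / 2 := by rw [ht2] at hteq; linarith
        rw [ht1v, hs32] at hslt
        norm_num at hslt
      · rw [hw t₁ r₁, hw t₂ r₂]
        simp only [Prod.mk.injEq]
        refine ⟨?_, ?_, ?_⟩
        · rw [hct2, hcc2, hr1e, hr2]
          linear_combination 2 * hcos1 + 2 * pyth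
        · rw [hst2, hss2, hr1e, hr2]; ring
        · rw [hss2, hr1e, hr2]; ring
end

section
/- Let δ > 0 be real, P_δ := [0,2π) × [-δ,δ], w(t,r) := (cos t + r·cos(t/2), sin t + r·sin(t/2), r·sin(t/2)), c_δ := min(1, max(δ,√2)/2), and s_δ := 2·c_δ·√(1 - c_δ²). Define the self-intersection set I_δ := { w(p₁) : p₁ ∈ P_δ and there exists p₂ ∈ P_δ with p₂ ≠ p₁ and w(p₂) = w(p₁) }. Then I_δ = { (−1, 0, s) ∈ ℝ³ : s_δ ≤ |s| < 1 }. -/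
open Real Set

set_option maxHeartbeats 1000000 in
theorem simple_mobius_self_intersection_set (δ : ℝ) (hδ : 0 < δ)
    (w : ℝ × ℝ → ℝ × ℝ × ℝ)
    (hw : ∀ t r : ℝ, w (t, r) =
      (Real.cos t + r * Real.cos (t / 2),
       Real.sin t + r * Real.sin (t / 2),
       r * Real.sin (t / 2)))
    (P : Set (ℝ × ℝ)) (hP : P = Set.Ico 0 (2 * π) ×ˢ Set.Icc (-δ) δ)
    (c s : ℝ) (hc : c = min 1 (max δ (Real.sqrt 2) / 2))
    (hs : s = 2 * c * Real.sqrt (1 - c ^ 2))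
    (I : Set (ℝ × ℝ × ℝ))
    (hI : I = {q | ∃ p₁ ∈ P, w p₁ = q ∧ ∃ p₂ ∈ P, p₂ ≠ p₁ ∧ w p₂ = w p₁}) :
    I = {q : ℝ × ℝ × ℝ | ∃ z : ℝ, q = (-1, 0, z) ∧ s ≤ |z| ∧ |z| < 1} := by
  have pi_pos := Real.pi_pos
  have hc1 : c ≤ 1 := by rw [hc]; exact min_le_left _ _
  have hc0 : 0 ≤ c := by
    rw [hc]
    apply le_min (by norm_num)
    have h1 := Real.sqrt_nonneg 2
    have h2 := le_max_right δ (Real.sqrt 2)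
    linarith only [h1, h2]
  have hs2 : s ^ 2 = 4 * c ^ 2 * (1 - c ^ 2) := by
    rw [hs, mul_pow, mul_pow, Real.sq_sqrt (by nlinarith only [hc0, hc1] : (0:ℝ) ≤ 1 - c ^ 2)]
    ring
  have hs0 : 0 ≤ s := by
    rw [hs]
    exact mul_nonneg (by linarith only [hc0]) (Real.sqrt_nonneg _)
  subst hP hI
  ext q
  simp only [Set.mem_setOf_eq]
  constructor
  · rintro ⟨⟨t₁, r₁⟩, hp₁, rfl, ⟨t₂, r₂⟩, hp₂, hne, heq⟩
    simp only [Set.mem_prod, Set.mem_Ico, Set.mem_Icc] at hp₁ hp₂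
    obtain ⟨⟨ht10, ht12⟩, hr1l, hr1r⟩ := hp₁
    obtain ⟨⟨ht20, ht22⟩, hr2l, hr2r⟩ := hp₂
    rw [hw, hw, Prod.mk.injEq, Prod.mk.injEq] at heq
    obtain ⟨e1, e2, e3⟩ := heq
    set A := Real.cos (t₁ / 2) with hA
    set B := Real.sin (t₁ / 2) with hB
    set C := Real.cos (t₂ / 2) with hC
    set D := Real.sin (t₂ / 2) with hD
    have p1 : B ^ 2 + A ^ 2 = 1 := Real.sin_sq_add_cos_sq _
    have p2 : D ^ 2 + C ^ 2 = 1 := Real.sin_sq_add_cos_sq _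
    have hB0 : 0 ≤ B :=
      Real.sin_nonneg_of_nonneg_of_le_pi (by linarith only [ht10]) (by linarith only [ht12])
    have hD0 : 0 ≤ D :=
      Real.sin_nonneg_of_nonneg_of_le_pi (by linarith only [ht20]) (by linarith only [ht22])
    have hcos1 : Real.cos t₁ = 2 * A ^ 2 - 1 := by
      rw [hA, ← Real.cos_two_mul]; congr 1; ring
    have hcos2 : Real.cos t₂ = 2 * C ^ 2 - 1 := by
      rw [hC, ← Real.cos_two_mul]; congr 1; ring
    have hsin1 : Real.sin t₁ = 2 * B * A := by
      rw [hA, hB, ← Real.sin_two_mul]; congr 1; ring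
    have hsin2 : Real.sin t₂ = 2 * D * C := by
      rw [hC, hD, ← Real.sin_two_mul]; congr 1; ring
    have teq : A = C → t₁ = t₂ := by
      intro h
      have m1 : t₁ / 2 ∈ Set.Icc 0 π := ⟨by linarith only [ht10], by linarith only [ht12]⟩
      have m2 : t₂ / 2 ∈ Set.Icc 0 π := ⟨by linarith only [ht20], by linarith only [ht22]⟩
      have h' : Real.cos (t₁ / 2) = Real.cos (t₂ / 2) := by rw [← hA, ← hC]; exact h
      have h2 := Real.injOn_cos m1 m2 h'
      linarith only [h2]
    have hBt : B = 0 → t₁ = 0 := by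
      intro hb
      by_contra h0
      have h1 : 0 < t₁ := lt_of_le_of_ne ht10 (Ne.symm h0)
      have hpos : 0 < Real.sin (t₁ / 2) :=
        Real.sin_pos_of_pos_of_lt_pi (by linarith only [h1]) (by linarith only [ht12])
      rw [← hB] at hpos; linarith only [hpos, hb]
    have hDt : D = 0 → t₂ = 0 := by
      intro hb
      by_contra h0
      have h1 : 0 < t₂ := lt_of_le_of_ne ht20 (Ne.symm h0)
      have hpos : 0 < Real.sin (t₂ / 2) :=
        Real.sin_pos_of_pos_of_lt_pi (by linarith only [h1]) (by linarith only [ht22])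
      rw [← hD] at hpos; linarith only [hpos, hb]
    have e2' : A * B = C * D := by
      linear_combination (e3 - e2 - hsin1 + hsin2) / 2
    have hsplit : (A ^ 2 - B ^ 2 - (C ^ 2 - D ^ 2)) * (A ^ 2 - B ^ 2 + (C ^ 2 - D ^ 2)) = 0 := by
      linear_combination (A ^ 2 + B ^ 2 + 1) * p1 - (C ^ 2 + D ^ 2 + 1) * p2
        - 4 * (A * B + C * D) * e2'
    rcases mul_eq_zero.mp hsplit with hpl | hmi
    · -- plus case: same point, contradiction
      exfalso
      have hBD : B = D := by
        have h1 : (B - D) * (B + D) = 0 := by linear_combination (p1 - p2 - hpl) / 2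
        rcases mul_eq_zero.mp h1 with h2 | h2
        · linarith only [h2]
        · linarith only [h2, hB0, hD0]
      by_cases hBz : B = 0
      · have ht1 : t₁ = 0 := hBt hBz
        have ht2 : t₂ = 0 := hDt (by rw [← hBD]; exact hBz)
        have hA1 : A = 1 := by rw [hA, ht1]; norm_num
        have hC1 : C = 1 := by rw [hC, ht2]; norm_num
        rw [ht1, ht2, hA1, hC1, Real.cos_zero] at e1
        have hr : r₂ = r₁ := by linarith only [e1]
        exact hne (by rw [ht2, ht1, hr])
      · have hAC : A = C := by
          have h1 : B * (A - C) = 0 := by linear_combination e2' - C * hBD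
          rcases mul_eq_zero.mp h1 with h2 | h2
          · exact absurd h2 hBz
          · linarith only [h2]
        have ht : t₁ = t₂ := teq hAC
        have hr : r₂ = r₁ := by
          have h1 : r₂ * B = r₁ * B := by rw [← hBD] at e3; exact e3
          exact mul_right_cancel₀ hBz h1
        exact hne (by rw [ht.symm, hr])
    · -- minus case
      have hD2 : D ^ 2 = A ^ 2 := by linarith only [hmi, p1, p2]
      have hC2 : C ^ 2 = B ^ 2 := by linarith only [hmi, p1, p2]
      have hXA : (r₁ + 2 * A) * A = (r₂ + 2 * C) * C := by
        linear_combination -e1 - hcos1 + hcos2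
      have hXB : (r₁ + 2 * A) * B = (r₂ + 2 * C) * D := by
        linear_combination -e3 + 2 * e2'
      have hXY : (r₁ + 2 * A) ^ 2 = (r₂ + 2 * C) ^ 2 := by
        linear_combination ((r₁ + 2 * A) * A + (r₂ + 2 * C) * C) * hXA
          + ((r₁ + 2 * A) * B + (r₂ + 2 * C) * D) * hXB
          - (r₁ + 2 * A) ^ 2 * p1 + (r₂ + 2 * C) ^ 2 * p2
      have h0 : ((r₁ + 2 * A) - (r₂ + 2 * C)) * ((r₁ + 2 * A) + (r₂ + 2 * C)) = 0 := by
        linear_combination hXY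
      have hXY0 : r₁ + 2 * A = 0 ∧ r₂ + 2 * C = 0 := by
        rcases mul_eq_zero.mp h0 with h | h
        · by_cases hX0 : r₁ + 2 * A = 0
          · exact ⟨hX0, by linarith only [h, hX0]⟩
          · exfalso
            have hAC : A = C := by
              have h1 : (r₁ + 2 * A) * (A - C) = 0 := by linear_combination hXA - C * h
              rcases mul_eq_zero.mp h1 with h2 | h2
              · exact absurd h2 hX0
              · linarith only [h2]
            have ht : t₁ = t₂ := teq hAC
            have hr : r₂ = r₁ := by linarith only [h, hAC]
            exact hne (by rw [ht.symm, hr])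
        · by_cases hX0 : r₁ + 2 * A = 0
          · exact ⟨hX0, by linarith only [h, hX0]⟩
          · exfalso
            have hBD : B + D = 0 := by
              have h1 : (r₁ + 2 * A) * (B + D) = 0 := by linear_combination hXB + D * h
              rcases mul_eq_zero.mp h1 with h2 | h2
              · exact absurd h2 hX0
              · exact h2
            have hACs : A + C = 0 := by
              have h1 : (r₁ + 2 * A) * (A + C) = 0 := by linear_combination hXA + C * h
              rcases mul_eq_zero.mp h1 with h2 | h2
              · exact absurd h2 hX0
              · exact h2
            have hBz : B = 0 := by linarith only [hBD, hB0, hD0]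
            have hDz : D = 0 := by linarith only [hBD, hB0, hD0]
            have ht1 : t₁ = 0 := hBt hBz
            have ht2 : t₂ = 0 := hDt hDz
            have hA1 : A = 1 := by rw [hA, ht1]; norm_num
            have hC1 : C = 1 := by rw [hC, ht2]; norm_num
            linarith only [hA1, hC1, hACs]
      obtain ⟨hX, hY⟩ := hXY0
      -- exclude A² = B²
      have hAB2 : A ^ 2 ≠ B ^ 2 := by
        intro hE
        have hDB : D = B := by
          have h1 : (D - B) * (D + B) = 0 := by linear_combination hD2 + hE
          rcases mul_eq_zero.mp h1 with h2 | h2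
          · linarith only [h2]
          · linarith only [h2, hB0, hD0]
        have hBne : B ≠ 0 := by
          intro hb
          have hb2 : B ^ 2 = 0 := by rw [hb]; ring
          linarith only [p1, hE, hb2]
        have hCA : C = A := by
          have h1 : B * (C - A) = 0 := by linear_combination -e2' - C * hDB
          rcases mul_eq_zero.mp h1 with h2 | h2
          · exact absurd h2 hBne
          · linarith only [h2]
        have ht : t₁ = t₂ := teq hCA.symm
        have hr : r₂ = r₁ := by linarith only [hX, hY, hCA]
        exact hne (by rw [ht.symm, hr])
      have hz4 : (r₁ * B) ^ 2 = 4 * A ^ 2 * (1 - A ^ 2) := by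
        linear_combination ((r₁ - 2 * A) * B ^ 2) * hX + 4 * A ^ 2 * p1
      refine ⟨r₁ * B, ?_, ?_, ?_⟩
      · -- w (t₁, r₁) = (-1, 0, r₁ * B)
        rw [hw]
        rw [← hA, ← hB]
        simp only [Prod.mk.injEq]
        refine ⟨by linear_combination hcos1 + A * hX,
          by linear_combination hsin1 + B * hX, by trivial⟩
      · -- s ≤ |r₁ * B|
        have hr1sq : r₁ ^ 2 ≤ δ ^ 2 := sq_le_sq' hr1l hr1r
        have hr2sq : r₂ ^ 2 ≤ δ ^ 2 := sq_le_sq' hr2l hr2r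
        have e4A : r₁ ^ 2 = 4 * A ^ 2 := by linear_combination (r₁ - 2 * A) * hX
        have e4C : r₂ ^ 2 = 4 * C ^ 2 := by linear_combination (r₂ - 2 * C) * hY
        have hA2d : 4 * A ^ 2 ≤ δ ^ 2 := by linarith only [hr1sq, e4A]
        have hC2d : 4 * C ^ 2 ≤ δ ^ 2 := by linarith only [hr2sq, e4C]
        have hA21 : A ^ 2 ≤ 1 := by linarith only [p1, sq_nonneg B]
        have hB21 : B ^ 2 ≤ 1 := by linarith only [p1, sq_nonneg A]
        have hAc : A ^ 2 ≤ c ^ 2 ∧ B ^ 2 ≤ c ^ 2 := by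
          rcases le_total 1 (max δ (Real.sqrt 2) / 2) with hm | hm
          · have hce : c = 1 := by rw [hc, min_eq_left hm]
            rw [hce]
            constructor
            · nlinarith only [hA21]
            · nlinarith only [hB21]
          · have hce : c = max δ (Real.sqrt 2) / 2 := by rw [hc, min_eq_right hm]
            have hdc : δ ≤ 2 * c := by
              have h3 := le_max_left δ (Real.sqrt 2); rw [hce]; linarith only [h3]
            constructor
            · nlinarith only [hA2d, hdc, hδ]
            · nlinarith only [hC2d, hdc, hδ, hC2]
        have h1 : 0 ≤ (c ^ 2 - A ^ 2) * (A ^ 2 + c ^ 2 - 1) :=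
          mul_nonneg (by linarith only [hAc.1]) (by linarith only [hAc.2, p1])
        refine le_of_pow_le_pow_left₀ two_ne_zero (abs_nonneg _) ?_
        rw [sq_abs, hs2, hz4]
        linarith only [h1]
      · -- |r₁ * B| < 1
        have hne2 : 2 * A ^ 2 - 1 ≠ 0 := by
          intro h2
          apply hAB2
          linarith only [h2, p1]
        have hpos : 0 < (2 * A ^ 2 - 1) ^ 2 := by
          have h3 := abs_pos.mpr hne2
          have h4 := sq_abs (2 * A ^ 2 - 1)
          nlinarith only [h3, h4]
        have hlt : (r₁ * B) ^ 2 < 1 := by linarith only [hz4, hpos]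
        rw [abs_lt]
        constructor
        · linarith only [hlt, sq_nonneg (r₁ * B + 1)]
        · linarith only [hlt, sq_nonneg (r₁ * B - 1)]
  · rintro ⟨z, rfl, hsz, hz1⟩
    have key : ∀ x r : ℝ, w (2 * x, r) =
        (2 * Real.cos x ^ 2 - 1 + r * Real.cos x,
         2 * Real.sin x * Real.cos x + r * Real.sin x, r * Real.sin x) := by
      intro x r
      rw [hw, show (2 * x) / 2 = x by ring, Real.cos_two_mul, Real.sin_two_mul]
    have sqrt2_sq : Real.sqrt 2 ^ 2 = 2 := Real.sq_sqrt (by norm_num)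
    have sqrt2_nonneg := Real.sqrt_nonneg 2
    have sqrt2_lt : Real.sqrt 2 < 2 := by nlinarith only [sqrt2_sq, sqrt2_nonneg]
    have sqrt2_pos : 0 < Real.sqrt 2 := Real.sqrt_pos.mpr (by norm_num)
    have hδ2 : Real.sqrt 2 < δ := by
      by_contra hle
      push_neg at hle
      have hmax : max δ (Real.sqrt 2) = Real.sqrt 2 := max_eq_right hle
      have hc' : c = Real.sqrt 2 / 2 := by
        rw [hc, hmax, min_eq_right (by linarith only [sqrt2_lt])]
      have e : (1:ℝ) - (Real.sqrt 2 / 2) ^ 2 = 1 / 2 := by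
        rw [div_pow, sqrt2_sq]; norm_num
      have hs1 : s = 1 := by
        rw [hs, hc', e, show 2 * (Real.sqrt 2 / 2) = Real.sqrt 2 by ring,
          ← Real.sqrt_mul (by norm_num : (0:ℝ) ≤ 2)]
        norm_num
      linarith only [hsz, hz1, hs1]
    have hcmin : c = min 1 (δ / 2) := by rw [hc, max_eq_left hδ2.le]
    have hcδ : c ≤ δ / 2 := by rw [hcmin]; exact min_le_right _ _
    have hchalf : Real.sqrt 2 / 2 < c := by
      rw [hcmin]
      exact lt_min (by linarith only [sqrt2_lt]) (by linarith only [hδ2])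
    have hc2half : 1 / 2 < c ^ 2 := by nlinarith only [sqrt2_sq, hchalf, sqrt2_pos]
    have hz2 : z ^ 2 < 1 := by nlinarith only [sq_abs z, abs_nonneg z, hz1]
    obtain ⟨Q, hQ⟩ : ∃ q', q' = Real.sqrt (1 - z ^ 2) := ⟨_, rfl⟩
    have hq0 : 0 < Q := by rw [hQ]; exact Real.sqrt_pos.mpr (by linarith only [hz2])
    have hq1 : Q ≤ 1 := by
      rw [hQ]; exact Real.sqrt_le_one.mpr (by linarith only [sq_nonneg z])
    have hq2 : Q ^ 2 = 1 - z ^ 2 := by rw [hQ]; exact Real.sq_sqrt (by linarith only [hz2])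
    obtain ⟨m, hm⟩ : ∃ m', m' = Real.sqrt ((1 + Q) / 2) := ⟨_, rfl⟩
    obtain ⟨n, hn⟩ : ∃ n', n' = Real.sqrt ((1 - Q) / 2) := ⟨_, rfl⟩
    have hm0 : 0 ≤ m := by rw [hm]; exact Real.sqrt_nonneg _
    have hn0 : 0 ≤ n := by rw [hn]; exact Real.sqrt_nonneg _
    have hm2 : m ^ 2 = (1 + Q) / 2 := by
      rw [hm]; exact Real.sq_sqrt (by linarith only [hq0])
    have hn2 : n ^ 2 = (1 - Q) / 2 := by
      rw [hn]; exact Real.sq_sqrt (by linarith only [hq1])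
    have hmn1 : m ^ 2 + n ^ 2 = 1 := by rw [hm2, hn2]; ring
    have hmnz : 2 * m * n = |z| := by
      have h1 : (2 * m * n) ^ 2 = z ^ 2 := by
        have h2 : (2 * m * n) ^ 2 = 4 * m ^ 2 * n ^ 2 := by ring
        rw [h2, hm2, hn2]
        linear_combination -hq2
      rw [← Real.sqrt_sq_eq_abs, ← h1,
        Real.sqrt_sq (mul_nonneg (mul_nonneg (by norm_num) hm0) hn0)]
    have hnm : n < m := by
      refine lt_of_pow_lt_pow_left₀ 2 hm0 ?_
      rw [hm2, hn2]
      linarith only [hq0]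
    have hmc : m ≤ c := by
      have h1 : s ^ 2 ≤ z ^ 2 := by nlinarith only [sq_abs z, hsz, hs0]
      have ha : z ^ 2 = 4 * m ^ 2 * n ^ 2 := by rw [← sq_abs, ← hmnz]; ring
      have hz4 : z ^ 2 = 4 * m ^ 2 - 4 * m ^ 4 := by
        linear_combination ha + 4 * m ^ 2 * hmn1
      by_contra hcm
      push_neg at hcm
      have hc2m : c ^ 2 < m ^ 2 := by nlinarith only [hcm, hc0]
      have h2 : 0 < (m ^ 2 - c ^ 2) * (m ^ 2 + c ^ 2 - 1) :=
        mul_pos (by linarith only [hc2m]) (by linarith only [hc2m, hc2half])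
      linarith only [h1, hs2, hz4, h2]
    have hm1 : m ≤ 1 := le_trans hmc hc1
    have hmδ : 2 * m ≤ δ := by linarith only [hmc, hcδ]
    have hnδ : 2 * n ≤ δ := by linarith only [hnm, hmc, hcδ]
    have hn1 : n ≤ 1 := by linarith only [hnm, hm1]
    have hcosm : Real.cos (Real.arccos m) = m := Real.cos_arccos (by linarith only [hm0]) hm1
    have hcosn : Real.cos (Real.arccos n) = n := Real.cos_arccos (by linarith only [hn0]) hn1
    have hsinm : Real.sin (Real.arccos m) = n := by
      rw [Real.sin_arccos, show 1 - m ^ 2 = n ^ 2 by linarith only [hmn1], Real.sqrt_sq hn0]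
    have hsinn : Real.sin (Real.arccos n) = m := by
      rw [Real.sin_arccos, show 1 - n ^ 2 = m ^ 2 by linarith only [hmn1], Real.sqrt_sq hm0]
    have ham_le : Real.arccos m ≤ π / 2 := Real.arccos_le_pi_div_two.mpr hm0
    have han_le : Real.arccos n ≤ π / 2 := Real.arccos_le_pi_div_two.mpr hn0
    have ham0 : 0 ≤ Real.arccos m := Real.arccos_nonneg _
    have han0 : 0 ≤ Real.arccos n := Real.arccos_nonneg _
    have hane : Real.arccos n ≠ Real.arccos m := by
      intro h
      have h2 : n = m := by rw [← hcosn, ← hcosm, h]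
      linarith only [h2, hnm]
    rcases le_or_gt z 0 with hzneg | hzpos
    · -- z ≤ 0 : use t/2 = arccos m resp arccos n
      have hz : z = -(2 * m * n) := by rw [hmnz, abs_of_nonpos hzneg]; ring
      have hwp1 : w (2 * Real.arccos m, -(2 * m)) = (-1, 0, z) := by
        rw [key, hcosm, hsinm]
        simp only [Prod.mk.injEq]
        refine ⟨by ring, by ring, by linear_combination -hz⟩
      have hwp2 : w (2 * Real.arccos n, -(2 * n)) = (-1, 0, z) := by
        rw [key, hcosn, hsinn]
        simp only [Prod.mk.injEq]
        refine ⟨by ring, by ring, by linear_combination -hz⟩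
      refine ⟨(2 * Real.arccos m, -(2 * m)), ?_, hwp1,
        (2 * Real.arccos n, -(2 * n)), ?_, ?_, hwp2.trans hwp1.symm⟩
      · simp only [Set.mem_prod, Set.mem_Ico, Set.mem_Icc]
        exact ⟨⟨by linarith only [ham0], by linarith only [ham_le, pi_pos]⟩,
          by linarith only [hmδ], by linarith only [hm0, hδ]⟩
      · simp only [Set.mem_prod, Set.mem_Ico, Set.mem_Icc]
        exact ⟨⟨by linarith only [han0], by linarith only [han_le, pi_pos]⟩,
          by linarith only [hnδ], by linarith only [hn0, hδ]⟩
      · intro h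
        rw [Prod.mk.injEq] at h
        exact hane (by linarith only [h.1])
    · -- z > 0 : use t/2 = π - arccos m resp π - arccos n
      have hz : z = 2 * m * n := by rw [hmnz, abs_of_pos hzpos]
      have hq_lt : Q < 1 := by nlinarith only [hq2, hq0, hzpos]
      have hm_lt : m < 1 := by nlinarith only [hm2, hq_lt, hm0]
      have hn_lt : n < 1 := by linarith only [hnm, hm_lt]
      have ham_pos : 0 < Real.arccos m := Real.arccos_pos.mpr hm_lt
      have han_pos : 0 < Real.arccos n := Real.arccos_pos.mpr hn_lt
      have hcm : Real.cos (π - Real.arccos m) = -m := by rw [Real.cos_pi_sub, hcosm]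
      have hsm : Real.sin (π - Real.arccos m) = n := by rw [Real.sin_pi_sub, hsinm]
      have hcn : Real.cos (π - Real.arccos n) = -n := by rw [Real.cos_pi_sub, hcosn]
      have hsn : Real.sin (π - Real.arccos n) = m := by rw [Real.sin_pi_sub, hsinn]
      have hwp1 : w (2 * (π - Real.arccos m), 2 * m) = (-1, 0, z) := by
        rw [key, hcm, hsm]
        simp only [Prod.mk.injEq]
        refine ⟨by ring, by ring, by linear_combination -hz⟩
      have hwp2 : w (2 * (π - Real.arccos n), 2 * n) = (-1, 0, z) := by
        rw [key, hcn, hsn]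
        simp only [Prod.mk.injEq]
        refine ⟨by ring, by ring, by linear_combination -hz⟩
      refine ⟨(2 * (π - Real.arccos m), 2 * m), ?_, hwp1,
        (2 * (π - Real.arccos n), 2 * n), ?_, ?_, hwp2.trans hwp1.symm⟩
      · simp only [Set.mem_prod, Set.mem_Ico, Set.mem_Icc]
        exact ⟨⟨by linarith only [ham_le, pi_pos], by linarith only [ham_pos]⟩,
          by linarith only [hm0, hδ], by linarith only [hmδ]⟩
      · simp only [Set.mem_prod, Set.mem_Ico, Set.mem_Icc]
        exact ⟨⟨by linarith only [han_le, pi_pos], by linarith only [han_pos]⟩,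
          by linarith only [hn0, hδ], by linarith only [hnδ]⟩
      · intro h
        rw [Prod.mk.injEq] at h
        exact hane (by linarith only [h.1])
end

section
/- Let δ > 0 be real, P_δ := [0,2π) × [-δ,δ], w(t,r) := (cos t + r·cos(t/2), sin t + r·sin(t/2), r·sin(t/2)), and let I_δ := { w(p₁) : p₁ ∈ P_δ and there exists p₂ ∈ P_δ with p₂ ≠ p₁ and w(p₂) = w(p₁) } be the self-intersection set. Then I_δ = ∅ if and only if δ ≤ √2. -/
open Real Set

lemma mobius_key (c1 s1 r1 c2 s2 r2 : ℝ)
    (h1 : c1^2 + s1^2 = 1) (h2 : c2^2 + s2^2 = 1)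
    (hs1 : 0 ≤ s1) (hs2 : 0 ≤ s2)
    (hz1 : s1 = 0 → c1 = 1) (hz2 : s2 = 0 → c2 = 1)
    (hr1 : r1^2 ≤ 2) (hr2 : r2^2 ≤ 2)
    (e1 : c1^2 - s1^2 + r1*c1 = c2^2 - s2^2 + r2*c2)
    (e2 : 2*s1*c1 + r1*s1 = 2*s2*c2 + r2*s2)
    (e3 : r1*s1 = r2*s2) :
    c1 = c2 ∧ s1 = s2 ∧ r1 = r2 := by
  have hA : s1*c1 = s2*c2 := by linarith
  have habs : s1^2 = s2^2 → s1 = s2 := by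
    intro h
    rcases mul_eq_zero.mp (show (s1-s2)*(s1+s2) = 0 by linear_combination h) with h'|h' <;> linarith
  by_cases hss : s1 = s2
  · subst hss
    by_cases hs0 : s1 = 0
    · have hc1 := hz1 hs0
      have hc2 := hz2 hs0
      refine ⟨by rw [hc1, hc2], rfl, ?_⟩
      rw [hc1, hc2, hs0] at e1
      linarith
    · exact ⟨mul_left_cancel₀ hs0 hA, rfl, mul_right_cancel₀ hs0 e3⟩
  · exfalso
    have hD : (s1^2 - s2^2) * (1 - s1^2 - s2^2) = 0 := by
      linear_combination (s1*c1 + s2*c2) * hA - s1^2 * h1 + s2^2 * h2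
    have hB : s1^2 + s2^2 = 1 := by
      rcases mul_eq_zero.mp hD with h|h
      · exact absurd (habs (by linarith)) hss
      · linarith
    have e1' : r1*c1 - r2*c2 = 2*(s1^2 - s2^2) := by linear_combination e1 - h1 + h2
    have h4 : r1*(c1*s2 - s1*c2) = 2*s2*(s1^2 - s2^2) := by linear_combination s2*e1' - c2*e3
    have h5 : s2*(c1*s2 - s1*c2) = c1*(s2^2 - s1^2) := by linear_combination s1*hA
    have h6 : (s1^2 - s2^2)*(r1*c1 + 2*s2^2) = 0 := by linear_combination r1*h5 - s2*h4
    have hsqne : s1^2 - s2^2 ≠ 0 := fun h => hss (habs (by linarith))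
    have hr1c1 : r1*c1 = -(2*s2^2) := by
      have := (mul_eq_zero.mp h6).resolve_left hsqne
      linarith
    have hr2c2 : r2*c2 = -(2*s1^2) := by linear_combination hr1c1 - e1'
    have hc1sq : c1^2 = s2^2 := by linarith
    have hc2sq : c2^2 = s1^2 := by linarith
    have k1 : r1^2 * s2^2 = 4*s2^4 := by
      linear_combination (r1*c1 - 2*s2^2)*hr1c1 - r1^2*hc1sq
    have k2 : r2^2 * s1^2 = 4*s1^4 := by
      linear_combination (r2*c2 - 2*s1^2)*hr2c2 - r2^2*hc2sq
    rcases lt_trichotomy (s1^2) (s2^2) with h|h|h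
    · have hgt : 1/2 < s2^2 := by linarith
      nlinarith [k1, mul_le_mul_of_nonneg_right hr1 (sq_nonneg s2), hgt]
    · exact hss (habs h)
    · have hgt : 1/2 < s1^2 := by linarith
      nlinarith [k2, mul_le_mul_of_nonneg_right hr2 (sq_nonneg s1), hgt]

lemma mobius_backward (δ t1 r1 t2 r2 : ℝ) (hδle : δ ≤ Real.sqrt 2)
    (ht10 : 0 ≤ t1) (ht1lt : t1 < 2*π) (hr1l : -δ ≤ r1) (hr1u : r1 ≤ δ)
    (ht20 : 0 ≤ t2) (ht2lt : t2 < 2*π) (hr2l : -δ ≤ r2) (hr2u : r2 ≤ δ)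
    (E1 : Real.cos t2 + r2 * Real.cos (t2/2) = Real.cos t1 + r1 * Real.cos (t1/2))
    (E2 : Real.sin t2 + r2 * Real.sin (t2/2) = Real.sin t1 + r1 * Real.sin (t1/2))
    (E3 : r2 * Real.sin (t2/2) = r1 * Real.sin (t1/2)) :
    t2 = t1 ∧ r2 = r1 := by
  have hpi := Real.pi_pos
  have hsq2 : Real.sqrt 2 ^ 2 = 2 := Real.sq_sqrt (by norm_num)
  have hsq2nn : (0:ℝ) ≤ Real.sqrt 2 := Real.sqrt_nonneg 2
  have pyth1 : Real.cos (t1/2)^2 + Real.sin (t1/2)^2 = 1 := Real.cos_sq_add_sin_sq _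
  have pyth2 : Real.cos (t2/2)^2 + Real.sin (t2/2)^2 = 1 := Real.cos_sq_add_sin_sq _
  have ct1 : Real.cos t1 = Real.cos (t1/2)^2 - Real.sin (t1/2)^2 := by
    conv_lhs => rw [show t1 = 2*(t1/2) by ring]
    exact Real.cos_two_mul' _
  have ct2 : Real.cos t2 = Real.cos (t2/2)^2 - Real.sin (t2/2)^2 := by
    conv_lhs => rw [show t2 = 2*(t2/2) by ring]
    exact Real.cos_two_mul' _
  have st1 : Real.sin t1 = 2 * Real.sin (t1/2) * Real.cos (t1/2) := by
    conv_lhs => rw [show t1 = 2*(t1/2) by ring]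
    exact Real.sin_two_mul _
  have st2 : Real.sin t2 = 2 * Real.sin (t2/2) * Real.cos (t2/2) := by
    conv_lhs => rw [show t2 = 2*(t2/2) by ring]
    exact Real.sin_two_mul _
  have hs1nn : 0 ≤ Real.sin (t1/2) := Real.sin_nonneg_of_nonneg_of_le_pi (by linarith) (by linarith)
  have hs2nn : 0 ≤ Real.sin (t2/2) := Real.sin_nonneg_of_nonneg_of_le_pi (by linarith) (by linarith)
  have hz1 : Real.sin (t1/2) = 0 → Real.cos (t1/2) = 1 := by
    intro h
    have ht1 : t1 = 0 := by
      by_contra h0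
      have hpos : 0 < t1 := lt_of_le_of_ne ht10 (Ne.symm h0)
      have : 0 < Real.sin (t1/2) := Real.sin_pos_of_pos_of_lt_pi (by linarith) (by linarith)
      linarith
    rw [ht1]
    norm_num
  have hz2 : Real.sin (t2/2) = 0 → Real.cos (t2/2) = 1 := by
    intro h
    have ht2 : t2 = 0 := by
      by_contra h0
      have hpos : 0 < t2 := lt_of_le_of_ne ht20 (Ne.symm h0)
      have : 0 < Real.sin (t2/2) := Real.sin_pos_of_pos_of_lt_pi (by linarith) (by linarith)
      linarith
    rw [ht2]
    norm_num
  have hrb1 : r1^2 ≤ 2 := by nlinarith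
  have hrb2 : r2^2 ≤ 2 := by nlinarith
  have e1 : Real.cos (t2/2)^2 - Real.sin (t2/2)^2 + r2 * Real.cos (t2/2) =
      Real.cos (t1/2)^2 - Real.sin (t1/2)^2 + r1 * Real.cos (t1/2) := by
    rw [ct1, ct2] at E1; linarith
  have e2 : 2 * Real.sin (t2/2) * Real.cos (t2/2) + r2 * Real.sin (t2/2) =
      2 * Real.sin (t1/2) * Real.cos (t1/2) + r1 * Real.sin (t1/2) := by
    rw [st1, st2] at E2; linarith
  obtain ⟨hceq, hseq, hreq⟩ := mobius_key (Real.cos (t2/2)) (Real.sin (t2/2)) r2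
    (Real.cos (t1/2)) (Real.sin (t1/2)) r1 pyth2 pyth1 hs2nn hs1nn hz2 hz1 hrb2 hrb1 e1 e2 E3
  have hteq : t2 = t1 := by
    have := Real.injOn_cos (⟨by linarith, by linarith⟩ : t2/2 ∈ Set.Icc 0 π)
      (⟨by linarith, by linarith⟩ : t1/2 ∈ Set.Icc 0 π) hceq
    linarith
  exact ⟨hteq, hreq⟩

lemma mobius_forward (δ : ℝ) (hδ : 0 < δ) (hcon : Real.sqrt 2 < δ)
    (w : ℝ × ℝ → ℝ × ℝ × ℝ)
    (hw : ∀ t r : ℝ, w (t, r) =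
      (Real.cos t + r * Real.cos (t / 2),
       Real.sin t + r * Real.sin (t / 2),
       r * Real.sin (t / 2))) :
    ∃ p₁ ∈ Set.Ico 0 (2 * π) ×ˢ Set.Icc (-δ) δ,
      ∃ p₂ ∈ Set.Ico 0 (2 * π) ×ˢ Set.Icc (-δ) δ, p₂ ≠ p₁ ∧ w p₂ = w p₁ := by
  have hsq2 : Real.sqrt 2 ^ 2 = 2 := Real.sq_sqrt (by norm_num)
  have hsq2nn : (0:ℝ) ≤ Real.sqrt 2 := Real.sqrt_nonneg 2
  have hsqrt2lt2 : Real.sqrt 2 < 2 := by nlinarith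
  have hpi := Real.pi_pos
  obtain ⟨c, hcd⟩ : ∃ c : ℝ, c = min δ 2 / 2 := ⟨_, rfl⟩
  have hm1 : Real.sqrt 2 < min δ 2 := lt_min hcon hsqrt2lt2
  have hmle : min δ 2 ≤ δ := min_le_left _ _
  have hm2 : min δ 2 ≤ 2 := min_le_right _ _
  have hc1 : c ≤ 1 := by rw [hcd]; linarith
  have hc0 : 0 < c := by rw [hcd]; nlinarith
  have hcδ : 2 * c ≤ δ := by rw [hcd]; linarith
  have hchalf : 1/2 < c^2 := by rw [hcd]; nlinarith
  clear hcd hm1 hmle hm2 hsqrt2lt2 hsq2 hsq2nn hcon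
  obtain ⟨s, hsd⟩ : ∃ s : ℝ, s = Real.sqrt (1 - c^2) := ⟨_, rfl⟩
  have hs2 : s^2 = 1 - c^2 := by rw [hsd]; exact Real.sq_sqrt (by nlinarith)
  have hs0 : 0 ≤ s := hsd ▸ Real.sqrt_nonneg _
  have hsc : s < c := by nlinarith
  obtain ⟨a, had⟩ : ∃ a : ℝ, a = Real.arccos c := ⟨_, rfl⟩
  have hca : Real.cos a = c := by rw [had]; exact Real.cos_arccos (by linarith) hc1
  have hsa : Real.sin a = s := by rw [had, Real.sin_arccos, hsd]
  have ha0 : 0 ≤ a := had ▸ Real.arccos_nonneg _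
  have hapi2 : a ≤ π/2 := by rw [had, Real.arccos_le_pi_div_two]; linarith
  clear had hsd
  refine ⟨(2*a, -(2*c)), ?_, (π - 2*a, -(2*s)), ?_, ?_, ?_⟩
  · refine ⟨⟨?_, ?_⟩, ?_, ?_⟩ <;> dsimp only <;> linarith
  · refine ⟨⟨?_, ?_⟩, ?_, ?_⟩ <;> dsimp only <;> linarith
  · intro h
    have h2 := congrArg Prod.snd h
    simp only at h2
    linarith
  · rw [hw, hw]
    have e1 : (π - 2*a)/2 = π/2 - a := by ring
    have e2 : (2*a)/2 = a := by ring
    rw [e1, e2, Real.cos_pi_sub, Real.sin_pi_sub, Real.cos_pi_div_two_sub,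
      Real.sin_pi_div_two_sub, Real.cos_two_mul, Real.sin_two_mul, hca, hsa]
    simp only [Prod.mk.injEq]
    refine ⟨by linear_combination (-2)*hs2, by ring, by ring⟩

theorem simple_mobius_self_intersection_empty_iff (δ : ℝ) (hδ : 0 < δ)
    (w : ℝ × ℝ → ℝ × ℝ × ℝ)
    (hw : ∀ t r : ℝ, w (t, r) =
      (Real.cos t + r * Real.cos (t / 2),
       Real.sin t + r * Real.sin (t / 2),
       r * Real.sin (t / 2)))
    (P : Set (ℝ × ℝ)) (hP : P = Set.Ico 0 (2 * π) ×ˢ Set.Icc (-δ) δ)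
    (I : Set (ℝ × ℝ × ℝ))
    (hI : I = {q | ∃ p₁ ∈ P, w p₁ = q ∧ ∃ p₂ ∈ P, p₂ ≠ p₁ ∧ w p₂ = w p₁}) :
    I = ∅ ↔ δ ≤ Real.sqrt 2 := by
  constructor
  · intro hempty
    by_contra hcon
    push_neg at hcon
    obtain ⟨p₁, hp1, p₂, hp2, hne, hweq⟩ := mobius_forward δ hδ hcon w hw
    have hmem : w p₁ ∈ I := by
      rw [hI]
      exact ⟨p₁, hP ▸ hp1, rfl, p₂, hP ▸ hp2, hne, hweq⟩
    rw [hempty] at hmem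
    exact hmem
  · intro hδle
    rw [Set.eq_empty_iff_forall_notMem]
    intro q hq
    rw [hI] at hq
    obtain ⟨⟨t1, r1⟩, hp1, hq1, ⟨t2, r2⟩, hp2, hne, heq⟩ := hq
    rw [hP] at hp1 hp2
    obtain ⟨⟨ht10, ht1lt⟩, hr1l, hr1u⟩ := hp1
    obtain ⟨⟨ht20, ht2lt⟩, hr2l, hr2u⟩ := hp2
    rw [hw, hw] at heq
    simp only [Prod.mk.injEq] at heq
    obtain ⟨E1, E2, E3⟩ := heq
    obtain ⟨hteq, hreq⟩ := mobius_backward δ t1 r1 t2 r2 hδle ht10 ht1lt hr1l hr1u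
      ht20 ht2lt hr2l hr2u E1 E2 E3
    exact hne (by rw [hteq, hreq])
end

section
/- Let δ > 0 be real, P_δ := [0,2π) × [-δ,δ], and w(t,r) := (cos t + r·cos(t/2), sin t + r·sin(t/2), r·sin(t/2)). Define f(x,y) := y − 2(x+1)y/((x+1)² + y²), g(x,y) := (x² + y² − 1)²/((x+1)² + y²), and S_δ := { (x,y) ∈ ℝ² \ {(−1,0)} : g(x,y) ≤ δ² }. Then the image w(P_δ) equals the topological closure in ℝ³ of the graph G(f) := { (x, y, f(x,y)) : (x,y) ∈ S_δ }. -/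
/-!
Write `c = cos (t/2)`, `s = sin (t/2)` and `ρ = 2c + r`. The double angle formulas give
`w(t, r) = (ρc - 1, ρs, rs)`, so the planar shadow of `w(t, r)` is the point with polar
coordinates `(ρ, t/2)` around `(-1, 0)`. For `ρ ≠ 0` this gives `g = (ρ - 2c)² = r²` and
`f = (ρ - 2c)s = rs`, and conversely every point `≠ (-1, 0)` has such polar coordinates with
`t/2 ∈ [0, π)`. Hence the graph of `f` over `S_δ` is exactly the image of the points of `P_δ`
with `ρ ≠ 0`. Since `ρ` vanishes for at most one `r` on each segment `t = const`, that image
is dense in `w(P_δ)`, which is closed: `w(2π, r) = w(0, -r)`, so `w(P_δ)` is the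
continuous image of the compact rectangle `[0, 2π] × [-δ, δ]`.
-/

open Real Set

noncomputable section

def mobiusMap (p : ℝ × ℝ) : ℝ × ℝ × ℝ :=
  (cos p.1 + p.2 * cos (p.1 / 2), sin p.1 + p.2 * sin (p.1 / 2), p.2 * sin (p.1 / 2))

def mobiusHeight (x y : ℝ) : ℝ := y - 2 * (x + 1) * y / ((x + 1) ^ 2 + y ^ 2)

def mobiusWidthSq (x y : ℝ) : ℝ := (x ^ 2 + y ^ 2 - 1) ^ 2 / ((x + 1) ^ 2 + y ^ 2)

def mobiusBase (δ : ℝ) : Set (ℝ × ℝ) := {p | p ≠ (-1, 0) ∧ mobiusWidthSq p.1 p.2 ≤ δ ^ 2}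

def mobiusGraph (δ : ℝ) : Set (ℝ × ℝ × ℝ) :=
  {q | ∃ p ∈ mobiusBase δ, q = (p.1, p.2, mobiusHeight p.1 p.2)}

end

lemma exists_polar_Ico_pi {x y : ℝ} (h : (x, y) ≠ 0) :
    ∃ θ ∈ Ico 0 π, ∃ ρ ≠ 0, x = ρ * cos θ ∧ y = ρ * sin θ := by
  set z : ℂ := ⟨x, y⟩
  have hz : 0 < ‖z‖ :=
    norm_pos_iff.2 fun h0 => h (Prod.ext (congrArg Complex.re h0) (congrArg Complex.im h0))
  have hx : x = ‖z‖ * cos z.arg := (Complex.norm_mul_cos_arg z).symm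
  have hy : y = ‖z‖ * sin z.arg := (Complex.norm_mul_sin_arg z).symm
  obtain ⟨hlo, hhi⟩ := Complex.arg_mem_Ioc z
  rcases lt_or_ge z.arg 0 with hneg | hnonneg
  · refine ⟨z.arg + π, ⟨by linarith, by linarith⟩, -‖z‖, by simpa using hz.ne', ?_, ?_⟩
    · rw [hx, cos_add_pi]; ring
    · rw [hy, sin_add_pi]; ring
  rcases hhi.lt_or_eq with hlt | heq
  · exact ⟨z.arg, ⟨hnonneg, hlt⟩, ‖z‖, hz.ne', hx, hy⟩
  · exact ⟨0, ⟨le_rfl, pi_pos⟩, -‖z‖, by simpa using hz.ne', by simp [hx, heq], by simp [hy, heq]⟩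

lemma mem_closure_Icc_sdiff_singleton {α : Type*} [LinearOrder α] [DenselyOrdered α]
    [TopologicalSpace α] [OrderTopology α] {a b r : α} (hab : a < b) (hr : r ∈ Icc a b) (x : α) :
    r ∈ closure (Icc a b \ {x}) := by
  obtain hrx | rfl := ne_or_eq r x
  · exact subset_closure ⟨hr, hrx⟩
  rcases lt_or_ge r b with hrb | hbr
  · have hsub : Ioo r b ⊆ Icc a b \ {r} := fun y hy => ⟨⟨hr.1.trans hy.1.le, hy.2.le⟩, hy.1.ne'⟩
    refine closure_mono hsub ?_
    rw [closure_Ioo hrb.ne]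
    exact left_mem_Icc.2 hrb.le
  · have har : a < r := hab.trans_le hbr
    have hsub : Ioo a r ⊆ Icc a b \ {r} := fun y hy => ⟨⟨hy.1.le, hy.2.le.trans hr.2⟩, hy.2.ne⟩
    refine closure_mono hsub ?_
    rw [closure_Ioo har.ne]
    exact right_mem_Icc.2 har.le

lemma continuous_mobiusMap : Continuous mobiusMap := by
  unfold mobiusMap; fun_prop

lemma mobiusMap_two_mul (θ r : ℝ) :
    mobiusMap (2 * θ, r) =
      ((2 * cos θ + r) * cos θ - 1, (2 * cos θ + r) * sin θ, r * sin θ) := by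
  simp only [mobiusMap, mul_div_cancel_left₀ θ two_ne_zero, cos_two_mul, sin_two_mul]
  ext <;> simp only <;> ring

lemma mobiusMap_two_pi (r : ℝ) : mobiusMap (2 * π, r) = mobiusMap (0, -r) := by
  simp [mobiusMap, mul_div_cancel_left₀]

section Polar

variable {ρ θ : ℝ}

lemma sq_add_sq_polar : (ρ * cos θ - 1 + 1) ^ 2 + (ρ * sin θ) ^ 2 = ρ ^ 2 := by
  linear_combination ρ ^ 2 * sin_sq_add_cos_sq θ

lemma polar_ne_neg_one_zero (hρ : ρ ≠ 0) : (ρ * cos θ - 1, ρ * sin θ) ≠ (-1, 0) := by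
  intro h
  simp only [Prod.mk.injEq] at h
  have : ρ ^ 2 = 0 := by rw [← sq_add_sq_polar (θ := θ), h.1, h.2]; ring
  exact hρ (pow_eq_zero_iff two_ne_zero |>.1 this)

lemma mobiusWidthSq_polar (hρ : ρ ≠ 0) :
    mobiusWidthSq (ρ * cos θ - 1) (ρ * sin θ) = (ρ - 2 * cos θ) ^ 2 := by
  have hnum : (ρ * cos θ - 1) ^ 2 + (ρ * sin θ) ^ 2 - 1 = ρ * (ρ - 2 * cos θ) := by
    linear_combination ρ ^ 2 * sin_sq_add_cos_sq θ
  rw [mobiusWidthSq, sq_add_sq_polar, hnum]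
  field_simp

lemma mobiusHeight_polar (hρ : ρ ≠ 0) :
    mobiusHeight (ρ * cos θ - 1) (ρ * sin θ) = (ρ - 2 * cos θ) * sin θ := by
  rw [mobiusHeight, sq_add_sq_polar]
  field_simp
  ring

end Polar

lemma mobiusMap_two_mul_mem_mobiusGraph {δ θ r : ℝ} (hr : r ∈ Icc (-δ) δ)
    (hρ : 2 * cos θ + r ≠ 0) : mobiusMap (2 * θ, r) ∈ mobiusGraph δ := by
  have hr' : r = 2 * cos θ + r - 2 * cos θ := by ring
  refine ⟨((2 * cos θ + r) * cos θ - 1, (2 * cos θ + r) * sin θ),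
    ⟨polar_ne_neg_one_zero hρ, ?_⟩, ?_⟩
  · rw [mobiusWidthSq_polar hρ, ← hr']
    exact sq_le_sq' hr.1 hr.2
  · rw [mobiusMap_two_mul, mobiusHeight_polar hρ, ← hr']

lemma mobiusGraph_subset_image {δ : ℝ} (hδ : 0 ≤ δ) :
    mobiusGraph δ ⊆ mobiusMap '' (Ico 0 (2 * π) ×ˢ Icc (-δ) δ) := by
  rintro _ ⟨⟨x, y⟩, ⟨hne, hwidth⟩, rfl⟩
  have hshift : (x + 1, y) ≠ 0 := fun h => by
    obtain ⟨hx, hy⟩ := Prod.mk_eq_zero.1 h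
    exact hne (Prod.ext (by linarith : x = -1) hy)
  obtain ⟨θ, ⟨hθ0, hθπ⟩, ρ, hρ, hx, rfl⟩ := exists_polar_Ico_pi hshift
  obtain rfl : x = ρ * cos θ - 1 := by linarith
  rw [mobiusWidthSq_polar hρ] at hwidth
  refine ⟨(2 * θ, ρ - 2 * cos θ), ⟨⟨by linarith, by linarith⟩, abs_le_of_sq_le_sq' hwidth hδ⟩, ?_⟩
  rw [mobiusMap_two_mul, mobiusHeight_polar hρ]
  ring_nf

lemma mobiusMap_image_Ico_eq_image_Icc (δ : ℝ) :
    mobiusMap '' (Ico 0 (2 * π) ×ˢ Icc (-δ) δ) = mobiusMap '' (Icc 0 (2 * π) ×ˢ Icc (-δ) δ) := by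
  refine (image_mono (prod_mono_left Ico_subset_Icc_self)).antisymm ?_
  rintro _ ⟨⟨t, r⟩, ⟨⟨ht0, ht2π⟩, hr⟩, rfl⟩
  rcases ht2π.lt_or_eq with hlt | rfl
  · exact ⟨(t, r), ⟨⟨ht0, hlt⟩, hr⟩, rfl⟩
  · exact ⟨(0, -r), ⟨⟨le_rfl, two_pi_pos⟩, by linarith [hr.2], by linarith [hr.1]⟩,
      (mobiusMap_two_pi r).symm⟩

lemma isClosed_mobiusMap_image (δ : ℝ) :
    IsClosed (mobiusMap '' (Ico 0 (2 * π) ×ˢ Icc (-δ) δ)) := by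
  rw [mobiusMap_image_Ico_eq_image_Icc]
  exact ((isCompact_Icc.prod isCompact_Icc).image continuous_mobiusMap).isClosed

lemma mobiusMap_mem_closure_mobiusGraph {δ : ℝ} (hδ : 0 < δ) (t : ℝ) {r : ℝ}
    (hr : r ∈ Icc (-δ) δ) : mobiusMap (t, r) ∈ closure (mobiusGraph δ) := by
  obtain ⟨θ, rfl⟩ : ∃ θ, t = 2 * θ := ⟨t / 2, by ring⟩
  have hmaps : MapsTo (fun r' => mobiusMap (2 * θ, r')) (Icc (-δ) δ \ {-2 * cos θ})
      (mobiusGraph δ) := fun r' ⟨hr', hne⟩ =>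
    mobiusMap_two_mul_mem_mobiusGraph hr' fun h => hne (by rw [mem_singleton_iff]; linarith)
  have hcont : Continuous fun r' => mobiusMap (2 * θ, r') :=
    continuous_mobiusMap.comp (Continuous.prodMk_right _)
  exact hmaps.closure hcont (mem_closure_Icc_sdiff_singleton (by linarith) hr _)

theorem simple_mobius_eq_closure_graph (δ : ℝ) (hδ : 0 < δ)
    (w : ℝ × ℝ → ℝ × ℝ × ℝ)
    (hw : ∀ t r : ℝ, w (t, r) =
      (Real.cos t + r * Real.cos (t / 2),
       Real.sin t + r * Real.sin (t / 2),
       r * Real.sin (t / 2)))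
    (P : Set (ℝ × ℝ)) (hP : P = Set.Ico 0 (2 * π) ×ˢ Set.Icc (-δ) δ)
    (f g : ℝ → ℝ → ℝ)
    (hf : ∀ x y : ℝ, f x y = y - 2 * (x + 1) * y / ((x + 1) ^ 2 + y ^ 2))
    (hg : ∀ x y : ℝ, g x y = (x ^ 2 + y ^ 2 - 1) ^ 2 / ((x + 1) ^ 2 + y ^ 2))
    (S : Set (ℝ × ℝ))
    (hS : S = {p : ℝ × ℝ | p ≠ (-1, 0) ∧ g p.1 p.2 ≤ δ ^ 2}) :
    w '' P = closure {q : ℝ × ℝ × ℝ | ∃ p ∈ S, q = (p.1, p.2, f p.1 p.2)} := by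
  obtain rfl : w = mobiusMap := funext fun p => hw p.1 p.2
  obtain rfl : f = mobiusHeight := funext₂ hf
  obtain rfl : g = mobiusWidthSq := funext₂ hg
  subst hS hP
  change _ = closure (mobiusGraph δ)
  refine Subset.antisymm ?_
    (closure_minimal (mobiusGraph_subset_image hδ.le) (isClosed_mobiusMap_image δ))
  rintro _ ⟨⟨t, r⟩, ⟨-, hr⟩, rfl⟩
  exact mobiusMap_mem_closure_mobiusGraph hδ t hr
end

section
/- Let δ > 0 be real, P_δ := [0,2π) × [-δ,δ], and w(t,r) := (cos t + r·cos(t/2), sin t + r·sin(t/2), r·sin(t/2)). Let ℓ := { (−1, 0, z) : z ∈ ℝ } ⊆ ℝ³, f(x,y) := y − 2(x+1)y/((x+1)² + y²), g(x,y) := (x² + y² − 1)²/((x+1)² + y²), and S_δ := { (x,y) ∈ ℝ² \ {(−1,0)} : g(x,y) ≤ δ² }. Then w(P_δ) \ ℓ = { (x, y, f(x,y)) : (x,y) ∈ S_δ }. -/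
open Real Set

lemma exists_half_angle (u v : ℝ) (huv : u ^ 2 + v ^ 2 = 1) :
    ∃ t ε : ℝ, t ∈ Set.Ico 0 (2 * π) ∧ (ε = 1 ∨ ε = -1) ∧
      Real.cos (t / 2) = ε * u ∧ Real.sin (t / 2) = ε * v := by
  have key : ∀ ε : ℝ, (ε = 1 ∨ ε = -1) → 0 ≤ ε * v → ε * u ≠ -1 →
      ∃ t ε' : ℝ, t ∈ Set.Ico 0 (2 * π) ∧ (ε' = 1 ∨ ε' = -1) ∧
        Real.cos (t / 2) = ε' * u ∧ Real.sin (t / 2) = ε' * v := by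
    intro ε hε hεv hεu
    have hε2 : ε ^ 2 = 1 := by rcases hε with h | h <;> rw [h] <;> norm_num
    have hb : -1 ≤ ε * u ∧ ε * u ≤ 1 := by
      constructor <;> nlinarith [sq_nonneg v, sq_nonneg (ε*u - 1), sq_nonneg (ε*u + 1)]
    refine ⟨2 * Real.arccos (ε * u), ε, ?_, hε, ?_, ?_⟩
    · constructor
      · have := Real.arccos_nonneg (ε * u); linarith
      · have h1 : Real.arccos (ε * u) ≤ π := Real.arccos_le_pi _
        have h2 : Real.arccos (ε * u) ≠ π := by
          intro h
          rw [Real.arccos_eq_pi] at h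
          exact hεu (le_antisymm h hb.1)
        have := lt_of_le_of_ne h1 h2
        linarith
    · rw [show 2 * Real.arccos (ε * u) / 2 = Real.arccos (ε * u) by ring,
        Real.cos_arccos hb.1 hb.2]
    · rw [show 2 * Real.arccos (ε * u) / 2 = Real.arccos (ε * u) by ring,
        Real.sin_arccos]
      have : 1 - (ε * u) ^ 2 = (ε * v) ^ 2 := by nlinarith
      rw [this, Real.sqrt_sq hεv]
  rcases lt_trichotomy v 0 with hv | hv | hv
  · apply key (-1) (Or.inr rfl) (by nlinarith) (by intro h; nlinarith)
  · have hu : (u - 1) * (u + 1) = 0 := by nlinarith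
    rcases mul_eq_zero.1 hu with h | h
    · apply key 1 (Or.inl rfl) (by nlinarith) (by intro h'; nlinarith)
    · apply key (-1) (Or.inr rfl) (by nlinarith) (by intro h'; nlinarith)
  · apply key 1 (Or.inl rfl) (by nlinarith) (by intro h; nlinarith)

theorem simple_mobius_minus_line_eq_graph (δ : ℝ) (hδ : 0 < δ)
    (w : ℝ × ℝ → ℝ × ℝ × ℝ)
    (hw : ∀ t r : ℝ, w (t, r) =
      (Real.cos t + r * Real.cos (t / 2),
       Real.sin t + r * Real.sin (t / 2),
       r * Real.sin (t / 2)))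
    (P : Set (ℝ × ℝ)) (hP : P = Set.Ico 0 (2 * π) ×ˢ Set.Icc (-δ) δ)
    (L : Set (ℝ × ℝ × ℝ)) (hL : L = {q : ℝ × ℝ × ℝ | ∃ z : ℝ, q = (-1, 0, z)})
    (f g : ℝ → ℝ → ℝ)
    (hf : ∀ x y : ℝ, f x y = y - 2 * (x + 1) * y / ((x + 1) ^ 2 + y ^ 2))
    (hg : ∀ x y : ℝ, g x y = (x ^ 2 + y ^ 2 - 1) ^ 2 / ((x + 1) ^ 2 + y ^ 2))
    (S : Set (ℝ × ℝ))
    (hS : S = {p : ℝ × ℝ | p ≠ (-1, 0) ∧ g p.1 p.2 ≤ δ ^ 2}) :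
    w '' P \ L = {q : ℝ × ℝ × ℝ | ∃ p ∈ S, q = (p.1, p.2, f p.1 p.2)} := by
  subst hP hL hS
  ext q
  simp only [mem_diff, mem_image, mem_setOf_eq, Prod.exists]
  constructor
  · rintro ⟨⟨t, r, htr, hq⟩, hqL⟩
    obtain ⟨ht, hr⟩ := (Set.mem_prod.1 htr)
    rw [hw] at hq
    set c := Real.cos (t / 2) with hc
    set s := Real.sin (t / 2) with hs
    have hcs : s ^ 2 + c ^ 2 = 1 := Real.sin_sq_add_cos_sq _
    have hcos : Real.cos t = 2 * c ^ 2 - 1 := by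
      rw [hc, ← Real.cos_two_mul]; ring_nf
    have hsin : Real.sin t = 2 * s * c := by
      rw [hs, hc, ← Real.sin_two_mul]; ring_nf
    by_cases hz : 2 * c + r = 0
    · exfalso
      apply hqL
      refine ⟨r * s, ?_⟩
      rw [← hq]
      have h1 : Real.cos t + r * c = -1 := by linear_combination hcos + c * hz
      have h2 : Real.sin t + r * s = 0 := by linear_combination hsin + s * hz
      rw [h1, h2]
    · set x := Real.cos t + r * c with hx
      set y := Real.sin t + r * s with hy
      have hxp : x + 1 = c * (2 * c + r) := by rw [hx, hcos]; ring
      have hyp : y = s * (2 * c + r) := by rw [hy, hsin]; ring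
      have hden : (x + 1) ^ 2 + y ^ 2 = (2 * c + r) ^ 2 := by
        rw [hxp, hyp]; linear_combination (2 * c + r) ^ 2 * hcs
      refine ⟨x, y, ⟨?_, ?_⟩, ?_⟩
      · intro h
        have hx1 : x = -1 := congrArg Prod.fst h
        have hy1 : y = 0 := congrArg Prod.snd h
        have h1 : c * (2 * c + r) = 0 := by rw [← hxp, hx1]; ring
        have h2 : s * (2 * c + r) = 0 := by rw [← hyp, hy1]
        have hc0 : c = 0 := by rcases mul_eq_zero.1 h1 with h | h; exact h; exact absurd h hz
        have hs0 : s = 0 := by rcases mul_eq_zero.1 h2 with h | h; exact h; exact absurd h hz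
        rw [hc0, hs0] at hcs; norm_num at hcs
      · rw [hg, hden]
        have hnum : x ^ 2 + y ^ 2 - 1 = r * (2 * c + r) := by
          rw [hx, hy, hcos, hsin]; linear_combination (2 * c + r) ^ 2 * hcs
        rw [hnum]
        have : (r * (2 * c + r)) ^ 2 / (2 * c + r) ^ 2 = r ^ 2 := by
          field_simp
        rw [this]
        exact sq_le_sq' hr.1 hr.2
      · rw [← hq, hf]
        simp only [Prod.mk.injEq]
        refine ⟨trivial, trivial, ?_⟩
        rw [hden, hxp, hyp]
        field_simp [hz]
        ring
  · rintro ⟨x, y, ⟨hne, hgle⟩, rfl⟩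
    have hd0 : (x + 1) ^ 2 + y ^ 2 ≠ 0 := by
      intro h
      apply hne
      have hx1 : x + 1 = 0 := by nlinarith [sq_nonneg (x+1), sq_nonneg y]
      have hy1 : y = 0 := by nlinarith [sq_nonneg (x+1), sq_nonneg y]
      have : x = -1 := by linarith
      rw [this, hy1]
    have hdpos : 0 < (x + 1) ^ 2 + y ^ 2 :=
      lt_of_le_of_ne (by positivity) (Ne.symm hd0)
    set ρ := Real.sqrt ((x + 1) ^ 2 + y ^ 2) with hρ
    have hρpos : 0 < ρ := Real.sqrt_pos.2 hdpos
    have hρne : ρ ≠ 0 := ne_of_gt hρpos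
    have hρsq : ρ ^ 2 = (x + 1) ^ 2 + y ^ 2 := Real.sq_sqrt (le_of_lt hdpos)
    set u := (x + 1) / ρ with hu
    set v := y / ρ with hv
    have huρ : u * ρ = x + 1 := by rw [hu]; field_simp
    have hvρ : v * ρ = y := by rw [hv]; field_simp
    have huv : u ^ 2 + v ^ 2 = 1 := by
      rw [hu, hv]
      field_simp
      linarith [hρsq]
    obtain ⟨t, ε, htmem, hε, hcost, hsint⟩ := exists_half_angle u v huv
    have hε2 : ε ^ 2 = 1 := by rcases hε with h | h <;> rw [h] <;> norm_num
    set r := ε * (ρ - 2 * u) with hrdef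
    have hr2 : r ^ 2 = (ρ - 2 * u) ^ 2 := by
      rw [hrdef]; linear_combination (ρ - 2 * u) ^ 2 * hε2
    have hgval : g x y = (ρ - 2 * u) ^ 2 := by
      rw [hg]
      have hnum : x ^ 2 + y ^ 2 - 1 = ρ * (ρ - 2 * u) := by
        have : ρ * (ρ - 2 * u) = ρ ^ 2 - 2 * (u * ρ) := by ring
        rw [this, huρ, hρsq]; ring
      rw [hnum, ← hρsq]
      rw [div_eq_iff (by positivity : (ρ:ℝ) ^ 2 ≠ 0)]
      ring
    have hrle : r ^ 2 ≤ δ ^ 2 := by rw [hr2, ← hgval]; exact hgle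
    have hrIcc : r ∈ Set.Icc (-δ) δ := by
      constructor <;> nlinarith
    have hcos : Real.cos t = 2 * u ^ 2 - 1 := by
      have := Real.cos_two_mul (t / 2)
      rw [show 2 * (t / 2) = t by ring] at this
      rw [this, hcost]; linear_combination 2 * u ^ 2 * hε2
    have hsin : Real.sin t = 2 * u * v := by
      have := Real.sin_two_mul (t / 2)
      rw [show 2 * (t / 2) = t by ring] at this
      rw [this, hcost, hsint]; linear_combination 2 * u * v * hε2
    refine ⟨⟨t, r, Set.mem_prod.2 ⟨htmem, hrIcc⟩, ?_⟩, ?_⟩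
    · rw [hw, hcost, hsint, hcos, hsin, hf]
      simp only [Prod.mk.injEq]
      refine ⟨?_, ?_, ?_⟩
      · rw [hrdef]; linear_combination (ρ - 2 * u) * u * hε2 + huρ
      · rw [hrdef]; linear_combination (ρ - 2 * u) * v * hε2 + hvρ
      · have h2uv : 2 * (x + 1) * y / ((x + 1) ^ 2 + y ^ 2) = 2 * u * v := by
          rw [← hρsq, hu, hv]
          field_simp
        rw [h2uv, hrdef]
        linear_combination (ρ - 2 * u) * v * hε2 + hvρ
    · rintro ⟨z, hzq⟩
      simp only [Prod.mk.injEq] at hzq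
      apply hne
      rw [hzq.1, hzq.2.1]
end

section
/- Let δ > 0 be real, P_δ := [0,2π) × [-δ,δ], and w(t,r) := (cos t + r·cos(t/2), sin t + r·sin(t/2), r·sin(t/2)). Let ℓ := { (−1, 0, z) : z ∈ ℝ }, b_δ := min(δ,√2)/2, and σ_δ := 2·b_δ·√(1 − b_δ²). Then w(P_δ) ∩ ℓ = { (−1, 0, z) : |z| ≤ σ_δ }. -/
open Real Set
set_option maxHeartbeats 1000000

private lemma mob_aux1 (b c : ℝ) (hc : c^2 ≤ b^2) (hb : b^2 ≤ 1/2) :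
    4*c^2*(1-c^2) ≤ 4*b^2*(1-b^2) := by
  nlinarith [mul_nonneg (sub_nonneg.2 hc) (by nlinarith [sq_nonneg c] : (0:ℝ) ≤ 1 - b^2 - c^2)]

private lemma mob_aux2 (b c : ℝ) (hb : b^2 = 1/2) (hc : c^2 ≤ 1) :
    4*c^2*(1-c^2) ≤ 4*b^2*(1-b^2) := by
  nlinarith [sq_nonneg (2*c^2 - 1)]

private lemma mob_aux3 (z σ : ℝ) (h : z^2 ≤ σ^2) (hσ : 0 ≤ σ) : |z| ≤ σ := by
  nlinarith [sq_abs z, abs_nonneg z]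

theorem simple_mobius_inter_line (δ : ℝ) (hδ : 0 < δ)
    (w : ℝ × ℝ → ℝ × ℝ × ℝ)
    (hw : ∀ t r : ℝ, w (t, r) =
      (Real.cos t + r * Real.cos (t / 2),
       Real.sin t + r * Real.sin (t / 2),
       r * Real.sin (t / 2)))
    (P : Set (ℝ × ℝ)) (hP : P = Set.Ico 0 (2 * π) ×ˢ Set.Icc (-δ) δ)
    (L : Set (ℝ × ℝ × ℝ)) (hL : L = {q : ℝ × ℝ × ℝ | ∃ z : ℝ, q = (-1, 0, z)})
    (b σ : ℝ) (hb : b = min δ (Real.sqrt 2) / 2)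
    (hσ : σ = 2 * b * Real.sqrt (1 - b ^ 2)) :
    w '' P ∩ L = {q : ℝ × ℝ × ℝ | ∃ z : ℝ, q = (-1, 0, z) ∧ |z| ≤ σ} := by
  have hs2 : (0:ℝ) ≤ Real.sqrt 2 := Real.sqrt_nonneg 2
  have hs2sq : (Real.sqrt 2)^2 = 2 := Real.sq_sqrt (by norm_num)
  have h2lt : Real.sqrt 2 < 2 := by nlinarith
  have hb0 : 0 ≤ b := by rw [hb]; positivity
  have hb1 : b < 1 := by
    have h1 : min δ (Real.sqrt 2) ≤ Real.sqrt 2 := min_le_right _ _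
    rw [hb]; linarith
  have hbsq : b^2 ≤ 1/2 := by
    have h1 : min δ (Real.sqrt 2) ≤ Real.sqrt 2 := min_le_right _ _
    have h2 : 0 ≤ min δ (Real.sqrt 2) := le_min hδ.le hs2
    rw [hb]; nlinarith
  have hbδ : 2 * b ≤ δ := by
    have h1 : min δ (Real.sqrt 2) ≤ δ := min_le_left _ _
    rw [hb]; linarith
  have hσ0 : 0 ≤ σ := by rw [hσ]; positivity
  have hσsq : σ^2 = 4 * b^2 * (1 - b^2) := by
    rw [hσ, mul_pow, mul_pow, Real.sq_sqrt (by nlinarith)]; ring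
  subst hP hL
  ext q
  constructor
  · rintro ⟨⟨⟨t, r⟩, ⟨⟨ht0, ht2⟩, hr1, hr2⟩, hwq⟩, z, rfl⟩
    rw [hw] at hwq
    simp only [Prod.mk.injEq] at hwq
    obtain ⟨e1, e2, e3⟩ := hwq
    set c := Real.cos (t/2) with hc
    set s := Real.sin (t/2) with hsdef
    have hcs : s^2 + c^2 = 1 := Real.sin_sq_add_cos_sq _
    have hcos2 : Real.cos t = 2*c^2 - 1 := by
      have := Real.cos_two_mul (t/2)
      rwa [show 2*(t/2) = t by ring] at this
    have hsin2 : Real.sin t = 2*s*c := by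
      have := Real.sin_two_mul (t/2)
      rwa [show 2*(t/2) = t by ring,
        show 2*Real.sin (t/2)*Real.cos (t/2) = 2*(Real.sin (t/2))*(Real.cos (t/2)) by ring] at this
    clear_value c s
    rw [hcos2] at e1
    rw [hsin2] at e2
    -- e1 : 2c^2 - 1 + r*c = -1, e2 : 2sc + rs = 0
    have key : 2*c + r = 0 := by
      by_contra h
      have hc0 : c = 0 := by
        have hh : c * (2*c + r) = 0 := by linear_combination e1
        rcases mul_eq_zero.1 hh with h'|h'
        · exact h'
        · exact absurd h' h
      have hs0 : s = 0 := by
        have hh : s * (2*c + r) = 0 := by linear_combination e2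
        rcases mul_eq_zero.1 hh with h'|h'
        · exact h'
        · exact absurd h' h
      rw [hc0, hs0] at hcs; norm_num at hcs
    have hc2le1 : c^2 ≤ 1 := by nlinarith [sq_nonneg s]
    have hr : r = -2*c := by linarith
    have hzz : z = -2*c*s := by rw [← e3, hr]
    have hs2' : s^2 = 1 - c^2 := by linarith
    have hz2 : z^2 = 4*c^2*(1-c^2) := by
      rw [hzz]; linear_combination (4*c^2) * hs2'
    have hzsq : z^2 ≤ σ^2 := by
      rw [hσsq, hz2]
      rcases le_total δ (Real.sqrt 2) with hd | hd
      · have hbeq : b = δ/2 := by rw [hb, min_eq_left hd]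
        have hc2 : c^2 ≤ b^2 := by
          have h1 : 2*c ≤ δ := by linarith
          have h2 : -(2*c) ≤ δ := by linarith
          rw [hbeq]; nlinarith
        exact mob_aux1 b c hc2 hbsq
      · have hbeq : b = Real.sqrt 2 / 2 := by rw [hb, min_eq_right hd]
        have hbh : b^2 = 1/2 := by rw [hbeq]; nlinarith
        exact mob_aux2 b c hbh hc2le1
    exact ⟨z, rfl, mob_aux3 z σ hzsq hσ0⟩
  · rintro ⟨z, rfl, hz⟩
    set f : ℝ → ℝ := fun u => -2*u*Real.sqrt (1-u^2) with hf
    have hcont : ContinuousOn f (Icc (-b) b) := by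
      apply Continuous.continuousOn
      fun_prop
    have hfb : f (-b) = σ := by
      rw [hσ]; show -2*(-b)*Real.sqrt (1-(-b)^2) = _; rw [neg_sq]; ring
    have hfb' : f b = -σ := by
      rw [hσ]; show -2*b*Real.sqrt (1-b^2) = _; ring
    have hzmem : z ∈ Icc (f b) (f (-b)) := by
      rw [hfb, hfb']
      exact ⟨(abs_le.1 hz).1, (abs_le.1 hz).2⟩
    obtain ⟨u, hu, hfu⟩ := intermediate_value_Icc' (by linarith : -b ≤ b) hcont hzmem
    obtain ⟨hul, hur⟩ := hu
    have hu1 : -1 ≤ u := by linarith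
    have hu1' : u ≤ 1 := by linarith
    have hu1lt : -1 < u := by linarith
    refine ⟨⟨(2*Real.arccos u, -2*u), ⟨⟨?_, ?_⟩, ⟨?_, ?_⟩⟩, ?_⟩, z, rfl⟩
    · show (0:ℝ) ≤ 2*Real.arccos u
      have := Real.arccos_nonneg u; linarith
    · show 2*Real.arccos u < 2*π
      have hle := Real.arccos_le_pi u
      have hne : Real.arccos u ≠ π := fun h => by
        have := Real.arccos_eq_pi.1 h; linarith
      have := lt_of_le_of_ne hle hne
      linarith
    · show -δ ≤ -2*u; linarith
    · show -2*u ≤ δ; linarith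
    · rw [hw]
      rw [show 2*Real.arccos u / 2 = Real.arccos u by ring, Real.cos_two_mul,
        Real.sin_two_mul, Real.cos_arccos hu1 hu1', Real.sin_arccos]
      simp only [Prod.mk.injEq]
      refine ⟨by ring, by ring, ?_⟩
      have hfu' : -2*u*Real.sqrt (1-u^2) = z := hfu
      linarith
end

section
/- Let δ > 0 be real, P_δ := [0,2π) × [-δ,δ], and w(t,r) := (cos t + r·cos(t/2), sin t + r·sin(t/2), r·sin(t/2)). Let f(x,y) := y − 2(x+1)y/((x+1)² + y²), g(x,y) := (x² + y² − 1)²/((x+1)² + y²), S_δ := { (x,y) ∈ ℝ² \ {(−1,0)} : g(x,y) ≤ δ² }, b_δ := min(δ,√2)/2, and σ_δ := 2·b_δ·√(1 − b_δ²). Then w(P_δ) = { (x, y, f(x,y)) : (x,y) ∈ S_δ } ∪ { (−1, 0, z) : |z| ≤ σ_δ }. -/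
open Real Set

set_option maxHeartbeats 1000000 in
private lemma mobius_aux_graph (δ : ℝ) (hδ : 0 < δ) (x y : ℝ)
    (hne : (x, y) ≠ ((-1 : ℝ), (0 : ℝ)))
    (f g : ℝ → ℝ → ℝ)
    (hf : ∀ x y : ℝ, f x y = y - 2 * (x + 1) * y / ((x + 1) ^ 2 + y ^ 2))
    (hg : ∀ x y : ℝ, g x y = (x ^ 2 + y ^ 2 - 1) ^ 2 / ((x + 1) ^ 2 + y ^ 2))
    (hgle : g x y ≤ δ ^ 2) :
    ∃ t r : ℝ, 0 ≤ t ∧ t < 2 * π ∧ -δ ≤ r ∧ r ≤ δ ∧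
      (Real.cos t + r * Real.cos (t / 2),
       Real.sin t + r * Real.sin (t / 2),
       r * Real.sin (t / 2)) = (x, y, f x y) := by
  have hne' : x ≠ -1 ∨ y ≠ 0 := by
    by_contra h; push_neg at h
    exact hne (by rw [h.1, h.2])
  have hpos : 0 < (x + 1) ^ 2 + y ^ 2 := by
    rcases hne' with h | h
    · have h1 : x + 1 ≠ 0 := fun hc => h (by linarith)
      positivity
    · positivity
  obtain ⟨s, hs2, hs0, hmnn, hcne⟩ :
      ∃ s : ℝ, s ^ 2 = (x + 1) ^ 2 + y ^ 2 ∧ s ≠ 0 ∧ 0 ≤ y / s ∧ (x + 1) / s ≠ -1 := by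
    by_cases h0 : y = 0
    · refine ⟨x + 1, by rw [h0]; ring, ?_, by rw [h0]; simp, ?_⟩
      · intro hc
        exact hne (by rw [h0, show x = -1 by linarith])
      · have hx1 : x + 1 ≠ 0 := by
          intro hc; exact hne (by rw [h0, show x = -1 by linarith])
        rw [div_self hx1]; norm_num
    · set R := Real.sqrt ((x + 1) ^ 2 + y ^ 2) with hRdef
      have hR2 : R ^ 2 = (x + 1) ^ 2 + y ^ 2 := Real.sq_sqrt hpos.le
      have hRpos : 0 < R := Real.sqrt_pos.2 hpos
      rcases lt_or_gt_of_ne h0 with hy | hy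
      · refine ⟨-R, by rw [neg_sq]; exact hR2, neg_ne_zero.2 hRpos.ne', ?_, ?_⟩
        · rw [div_nonneg_iff]; right; constructor <;> linarith
        · intro hc
          have hxR : x + 1 = R := by
            have := (div_eq_iff (neg_ne_zero.2 hRpos.ne')).1 hc; linarith
          have : y ^ 2 = 0 := by nlinarith
          exact h0 (by nlinarith)
      · refine ⟨R, hR2, by positivity, by positivity, ?_⟩
        · intro hc
          have hxR : x + 1 = -R := by
            have := (div_eq_iff hRpos.ne').1 hc; linarith
          have : y ^ 2 = 0 := by nlinarith
          exact h0 (by nlinarith)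
  set c := (x + 1) / s with hcdef
  set m := y / s with hmdef
  have hcs : c * s = x + 1 := div_mul_cancel₀ _ hs0
  have hms : m * s = y := div_mul_cancel₀ _ hs0
  have hcm : c ^ 2 + m ^ 2 = 1 := by
    have : (c * s) ^ 2 + (m * s) ^ 2 = s ^ 2 := by rw [hcs, hms, hs2]
    have hs2ne : s ^ 2 ≠ 0 := pow_ne_zero 2 hs0
    field_simp at this ⊢
    nlinarith [this]
  have hcle : c ≤ 1 := by nlinarith [sq_nonneg m]
  have hcge : -1 < c := lt_of_le_of_ne (by nlinarith [sq_nonneg m]) (Ne.symm hcne)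
  have harc : Real.arccos c < π := by
    rcases lt_or_eq_of_le (Real.arccos_le_pi c) with h | h
    · exact h
    · exact absurd (Real.arccos_eq_pi.1 h) (by linarith)
  have hcosac : Real.cos (Real.arccos c) = c := Real.cos_arccos hcge.le hcle
  have hsinac : Real.sin (Real.arccos c) = m := by
    rw [Real.sin_arccos, show (1 : ℝ) - c ^ 2 = m ^ 2 by linarith, Real.sqrt_sq hmnn]
  have hnum : x ^ 2 + y ^ 2 - 1 = s * (s - 2 * c) := by
    linear_combination (-1) * hs2 + 2 * hcs
  have hgr : g x y = (s - 2 * c) ^ 2 := by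
    rw [hg, ← hs2, hnum, div_eq_iff (pow_ne_zero 2 hs0)]; ring
  have hrb : (s - 2 * c) ^ 2 ≤ δ ^ 2 := by rw [← hgr]; exact hgle
  refine ⟨2 * Real.arccos c, s - 2 * c, by linarith [Real.arccos_nonneg c], by linarith,
    by nlinarith, by nlinarith, ?_⟩
  rw [show (2 : ℝ) * Real.arccos c / 2 = Real.arccos c by ring,
    Real.cos_two_mul, Real.sin_two_mul, hcosac, hsinac]
  simp only [Prod.mk.injEq]
  refine ⟨by linear_combination hcs, by linear_combination hms, ?_⟩
  rw [hf, ← hs2, ← hcs, ← hms]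
  field_simp

set_option maxHeartbeats 1000000 in
private lemma mobius_aux_seg (δ : ℝ) (hδ : 0 < δ) (b σ z : ℝ)
    (hb : b = min δ (Real.sqrt 2) / 2)
    (hσ : σ = 2 * b * Real.sqrt (1 - b ^ 2)) (hz : |z| ≤ σ) :
    ∃ t r : ℝ, 0 ≤ t ∧ t < 2 * π ∧ -δ ≤ r ∧ r ≤ δ ∧
      (Real.cos t + r * Real.cos (t / 2),
       Real.sin t + r * Real.sin (t / 2),
       r * Real.sin (t / 2)) = (-1, 0, z) := by
  have sqrt2_sq : Real.sqrt 2 ^ 2 = 2 := Real.sq_sqrt (by norm_num)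
  have sqrt2_nn : 0 ≤ Real.sqrt 2 := Real.sqrt_nonneg 2
  have sqrt2_lt : Real.sqrt 2 < 2 := by nlinarith
  have hbpos : 0 < b := by
    rw [hb]; have := lt_min hδ (by nlinarith : (0:ℝ) < Real.sqrt 2); linarith
  have hble : b ≤ Real.sqrt 2 / 2 := by
    rw [hb]; linarith [min_le_right δ (Real.sqrt 2)]
  have hbδ : 2 * b ≤ δ := by
    rw [hb]; linarith [min_le_left δ (Real.sqrt 2)]
  have hblt1 : b < 1 := by linarith
  have hF : ContinuousOn (fun u : ℝ => 2 * u * Real.sqrt (1 - u ^ 2)) (Icc 0 b) :=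
    ((continuous_const.mul continuous_id).mul
      ((continuous_const.sub (continuous_pow 2)).sqrt)).continuousOn
  have hmem : |z| ∈ Icc ((fun u : ℝ => 2 * u * Real.sqrt (1 - u ^ 2)) 0)
      ((fun u : ℝ => 2 * u * Real.sqrt (1 - u ^ 2)) b) := by
    constructor
    · simp [abs_nonneg]
    · show |z| ≤ 2 * b * Real.sqrt (1 - b ^ 2)
      rw [← hσ]; exact hz
  obtain ⟨u, huIcc, hFu⟩ := intermediate_value_Icc hbpos.le hF hmem
  obtain ⟨hu0, hub⟩ := huIcc
  simp only at hFu
  have hult : u < 1 := by linarith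
  obtain ⟨c, hc2, hzc⟩ : ∃ c : ℝ, c ^ 2 = u ^ 2 ∧ -2 * c * Real.sqrt (1 - c ^ 2) = z := by
    rcases le_or_gt 0 z with h0 | h0
    · refine ⟨-u, by ring, ?_⟩
      rw [show (1:ℝ) - (-u) ^ 2 = 1 - u ^ 2 by ring,
        show -2 * -u * Real.sqrt (1 - u ^ 2) = 2 * u * Real.sqrt (1 - u ^ 2) by ring, hFu]
      exact abs_of_nonneg h0
    · exact ⟨u, rfl, by
        rw [show -2 * u * Real.sqrt (1 - u ^ 2) = -(2 * u * Real.sqrt (1 - u ^ 2)) by ring, hFu]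
        rw [abs_of_neg h0]; ring⟩
  have hcle : c ≤ 1 := by nlinarith
  have hcge : -1 < c := by nlinarith
  have harc : Real.arccos c < π := by
    rcases lt_or_eq_of_le (Real.arccos_le_pi c) with h | h
    · exact h
    · exact absurd (Real.arccos_eq_pi.1 h) (by linarith)
  have hcosac : Real.cos (Real.arccos c) = c := Real.cos_arccos hcge.le hcle
  refine ⟨2 * Real.arccos c, -2 * c, by linarith [Real.arccos_nonneg c], by linarith,
    by nlinarith, by nlinarith, ?_⟩
  rw [show (2 : ℝ) * Real.arccos c / 2 = Real.arccos c by ring,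
    Real.cos_two_mul, Real.sin_two_mul, hcosac, Real.sin_arccos]
  simp only [Prod.mk.injEq]
  refine ⟨by ring, by ring, by linear_combination hzc⟩

set_option maxHeartbeats 1000000 in
theorem simple_mobius_eq_graph_union_segment (δ : ℝ) (hδ : 0 < δ)
    (w : ℝ × ℝ → ℝ × ℝ × ℝ)
    (hw : ∀ t r : ℝ, w (t, r) =
      (Real.cos t + r * Real.cos (t / 2),
       Real.sin t + r * Real.sin (t / 2),
       r * Real.sin (t / 2)))
    (P : Set (ℝ × ℝ)) (hP : P = Set.Ico 0 (2 * π) ×ˢ Set.Icc (-δ) δ)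
    (f g : ℝ → ℝ → ℝ)
    (hf : ∀ x y : ℝ, f x y = y - 2 * (x + 1) * y / ((x + 1) ^ 2 + y ^ 2))
    (hg : ∀ x y : ℝ, g x y = (x ^ 2 + y ^ 2 - 1) ^ 2 / ((x + 1) ^ 2 + y ^ 2))
    (S : Set (ℝ × ℝ))
    (hS : S = {p : ℝ × ℝ | p ≠ (-1, 0) ∧ g p.1 p.2 ≤ δ ^ 2})
    (b σ : ℝ) (hb : b = min δ (Real.sqrt 2) / 2)
    (hσ : σ = 2 * b * Real.sqrt (1 - b ^ 2)) :
    w '' P = {q : ℝ × ℝ × ℝ | ∃ p ∈ S, q = (p.1, p.2, f p.1 p.2)} ∪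
      {q : ℝ × ℝ × ℝ | ∃ z : ℝ, q = (-1, 0, z) ∧ |z| ≤ σ} := by
  have sqrt2_sq : Real.sqrt 2 ^ 2 = 2 := Real.sq_sqrt (by norm_num)
  have sqrt2_nn : 0 ≤ Real.sqrt 2 := Real.sqrt_nonneg 2
  have hbpos : 0 < b := by
    rw [hb]; have := lt_min hδ (by nlinarith : (0:ℝ) < Real.sqrt 2); linarith
  have hble : b ≤ Real.sqrt 2 / 2 := by
    rw [hb]; linarith [min_le_right δ (Real.sqrt 2)]
  have hbδ : 2 * b ≤ δ := by
    rw [hb]; linarith [min_le_left δ (Real.sqrt 2)]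
  have hb2 : b ^ 2 ≤ 1 / 2 := by nlinarith
  have h1b : (0:ℝ) ≤ 1 - b ^ 2 := by linarith
  have hsq1b : Real.sqrt (1 - b ^ 2) ^ 2 = 1 - b ^ 2 := Real.sq_sqrt h1b
  have hσ0 : 0 ≤ σ := by
    rw [hσ]; positivity
  have hσ2 : σ ^ 2 = 4 * b ^ 2 * (1 - b ^ 2) := by rw [hσ]; nlinarith [hsq1b]
  ext q
  constructor
  · rintro ⟨⟨t, r⟩, htr, rfl⟩
    rw [hP] at htr
    obtain ⟨⟨ht0, ht2⟩, hr1, hr2⟩ := htr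
    simp only at ht0 ht2 hr1 hr2
    rw [hw]
    obtain ⟨c, hcdef⟩ : ∃ c, Real.cos (t / 2) = c := ⟨_, rfl⟩
    obtain ⟨m, hmdef⟩ : ∃ m, Real.sin (t / 2) = m := ⟨_, rfl⟩
    have hcm : c ^ 2 + m ^ 2 = 1 := by
      rw [← hcdef, ← hmdef, add_comm]; exact Real.sin_sq_add_cos_sq _
    have hm0 : 0 ≤ m := by
      rw [← hmdef]
      exact Real.sin_nonneg_of_nonneg_of_le_pi (by linarith) (by linarith [Real.pi_pos])
    have hct : Real.cos t = 2 * c ^ 2 - 1 := by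
      have h := Real.cos_two_mul (t / 2)
      rw [show 2 * (t / 2) = t by ring, hcdef] at h
      linarith
    have hst : Real.sin t = 2 * m * c := by
      have h := Real.sin_two_mul (t / 2)
      rw [show 2 * (t / 2) = t by ring, hcdef, hmdef] at h
      linarith
    rw [hcdef, hmdef]
    by_cases hs : 2 * c + r = 0
    · right
      refine ⟨r * m, ?_, ?_⟩
      · have hr2c : r = -2 * c := by linarith
        have hx : Real.cos t + r * c = -1 := by rw [hct, hr2c]; ring
        have hy : Real.sin t + r * m = 0 := by rw [hst, hr2c]; ring
        rw [hx, hy]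
      · have hr2c : r = -2 * c := by linarith
        have hc2 : c ^ 2 ≤ δ ^ 2 / 4 := by nlinarith
        have hc1 : c ^ 2 ≤ 1 := by nlinarith
        have hz2 : (r * m) ^ 2 ≤ σ ^ 2 := by
          rw [hσ2]
          have hzval : (r * m) ^ 2 = 4 * c ^ 2 * (1 - c ^ 2) := by
            rw [hr2c]; linear_combination (4 * c ^ 2) * hcm
          rw [hzval]
          rcases le_total δ (Real.sqrt 2) with hcase | hcase
          · have hbval : b = δ / 2 := by rw [hb, min_eq_left hcase]
            have hcb : c ^ 2 ≤ b ^ 2 := by rw [hbval]; nlinarith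
            have hkey : 0 ≤ (b ^ 2 - c ^ 2) * (1 - b ^ 2 - c ^ 2) :=
              mul_nonneg (by linarith) (by linarith)
            nlinarith [hkey]
          · have hbval : b = Real.sqrt 2 / 2 := by rw [hb, min_eq_right hcase]
            have hbsq : b ^ 2 = 1 / 2 := by rw [hbval]; nlinarith
            nlinarith [sq_nonneg (2 * c ^ 2 - 1)]
        nlinarith [sq_abs (r * m), abs_nonneg (r * m)]
    · left
      have hx : Real.cos t + r * c = c * (2 * c + r) - 1 := by rw [hct]; ring
      have hy : Real.sin t + r * m = m * (2 * c + r) := by rw [hst]; ring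
      refine ⟨(Real.cos t + r * c, Real.sin t + r * m), ?_, ?_⟩
      · rw [hS]
        constructor
        · intro hcon
          rw [Prod.mk.injEq] at hcon
          obtain ⟨h1, h2⟩ := hcon
          rw [hx] at h1; rw [hy] at h2
          have hc0 : c = 0 := by
            have : c * (2 * c + r) = 0 := by linarith
            exact (mul_eq_zero.1 this).resolve_right hs
          have hm00 : m = 0 := (mul_eq_zero.1 h2).resolve_right hs
          rw [hc0, hm00] at hcm; norm_num at hcm
        · show g _ _ ≤ δ ^ 2
          have hgr : g (Real.cos t + r * c) (Real.sin t + r * m) = r ^ 2 := by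
            rw [hg, hx, hy]
            have hden : (c * (2 * c + r) - 1 + 1) ^ 2 + (m * (2 * c + r)) ^ 2
                = (2 * c + r) ^ 2 := by linear_combination (2 * c + r) ^ 2 * hcm
            have hnum : (c * (2 * c + r) - 1) ^ 2 + (m * (2 * c + r)) ^ 2 - 1
                = (2 * c + r) * r := by linear_combination (2 * c + r) ^ 2 * hcm
            rw [hden, hnum, div_eq_iff (pow_ne_zero 2 hs)]; ring
          rw [hgr]; nlinarith
      · have hfval : f (Real.cos t + r * c) (Real.sin t + r * m) = r * m := by
          rw [hf, hx, hy]
          have hden : (c * (2 * c + r) - 1 + 1) ^ 2 + (m * (2 * c + r)) ^ 2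
              = (2 * c + r) ^ 2 := by linear_combination (2 * c + r) ^ 2 * hcm
          rw [hden]
          field_simp
          ring
        rw [hfval]
  · rintro (⟨p, hpS, rfl⟩ | ⟨z, rfl, hz⟩)
    · obtain ⟨x, y⟩ := p
      rw [hS] at hpS
      obtain ⟨hne, hgle⟩ := hpS
      obtain ⟨t, r, h1, h2, h3, h4, heq⟩ :=
        mobius_aux_graph δ hδ x y hne f g hf hg hgle
      refine ⟨(t, r), ?_, ?_⟩
      · rw [hP]; exact ⟨⟨h1, h2⟩, h3, h4⟩
      · rw [hw]; exact heq
    · obtain ⟨t, r, h1, h2, h3, h4, heq⟩ :=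
        mobius_aux_seg δ hδ b σ z hb hσ hz
      refine ⟨(t, r), ?_, ?_⟩
      · rw [hP]; exact ⟨⟨h1, h2⟩, h3, h4⟩
      · rw [hw]; exact heq
end

section
/- Let w(t,r) := (cos t + r·cos(t/2), sin t + r·sin(t/2), r·sin(t/2)) and P_∞ := [0,2π) × ℝ. For (x,y) ∈ ℝ², define Z_w(x,y) := { z ∈ ℝ : (x,y,z) ∈ w(P_∞) }. Then Z_w(−1,0) = [−1,1]. -/
open Real Set

theorem simple_mobius_cross_section_at_neg_one_zero
    (w : ℝ × ℝ → ℝ × ℝ × ℝ)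
    (hw : ∀ t r : ℝ, w (t, r) =
      (Real.cos t + r * Real.cos (t / 2),
       Real.sin t + r * Real.sin (t / 2),
       r * Real.sin (t / 2)))
    (Pinf : Set (ℝ × ℝ)) (hPinf : Pinf = Set.Ico 0 (2 * π) ×ˢ Set.univ)
    (Z : ℝ → ℝ → Set ℝ)
    (hZ : ∀ x y : ℝ, Z x y = {z : ℝ | (x, y, z) ∈ w '' Pinf}) :
    Z (-1) 0 = Set.Icc (-1) 1 := by
  subst hPinf
  ext z
  simp only [hZ, Set.mem_setOf_eq, Set.mem_image, Set.mem_Icc, Set.mem_prod,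
    Set.mem_univ, and_true, Set.mem_Ico, Prod.exists]
  constructor
  · rintro ⟨t, r, ht, heq⟩
    rw [hw] at heq
    have hy : Real.sin t + r * Real.sin (t / 2) = 0 := by
      have := congrArg (fun p => p.2.1) heq; simpa using this
    have hzz : r * Real.sin (t / 2) = z := by
      have := congrArg (fun p => p.2.2) heq; simpa using this
    have hz' : z = - Real.sin t := by linarith
    constructor <;> nlinarith [Real.neg_one_le_sin t, Real.sin_le_one t]
  · intro hz
    set t : ℝ := if z ≤ 0 then Real.arcsin (-z) else Real.arcsin (-z) + 2 * π with htdef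
    have hz1 : (-1 : ℝ) ≤ -z := by linarith [hz.2]
    have hz2 : -z ≤ 1 := by linarith [hz.1]
    have hsin : Real.sin t = -z := by
      by_cases h : z ≤ 0
      · simp only [htdef, if_pos h]
        exact Real.sin_arcsin hz1 hz2
      · simp only [htdef, if_neg h]
        rw [Real.sin_add_two_pi]
        exact Real.sin_arcsin hz1 hz2
    have htmem : 0 ≤ t ∧ t < 2 * π := by
      by_cases h : z ≤ 0
      · simp only [htdef, if_pos h]
        constructor
        · exact Real.arcsin_nonneg.2 (by linarith)
        · have := Real.arcsin_le_pi_div_two (-z)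
          have := Real.pi_pos
          linarith
      · simp only [htdef, if_neg h]
        constructor
        · have := Real.neg_pi_div_two_le_arcsin (-z)
          have := Real.pi_pos
          linarith
        · have : Real.arcsin (-z) < 0 := by
            rw [Real.arcsin_neg]
            have : 0 < Real.arcsin z := Real.arcsin_pos.2 (by linarith)
            linarith
          linarith
    refine ⟨t, -2 * Real.cos (t / 2), htmem, ?_⟩
    rw [hw]
    have h2 : 2 * (t / 2) = t := by ring
    have hc := Real.cos_two_mul (t / 2)
    have hs := Real.sin_two_mul (t / 2)
    rw [h2] at hc hs
    simp only [Prod.mk.injEq]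
    refine ⟨by nlinarith, by nlinarith, by nlinarith⟩
end

section
/- Let w(t,r) := (cos t + r·cos(t/2), sin t + r·sin(t/2), r·sin(t/2)) and P_∞ := [0,2π) × ℝ. For (x,y) ∈ ℝ², define Z_w(x,y) := { z ∈ ℝ : (x,y,z) ∈ w(P_∞) }. Then for every (x,y) ∈ ℝ² with (x,y) ≠ (−1,0), the set Z_w(x,y) has exactly one element. -/
open Real Set

/-!
Writing `t = 2θ` and `ρ = 2 cos θ + r`, the strip is `(ρ cos θ - 1, ρ sin θ, ρ sin θ - sin 2θ)`.
So `(x + 1, y)` is `ρ (cos θ, sin θ)`, which determines `sin 2θ = 2y(x+1)/((x+1)² + y²)` and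
hence `z`; conversely every line through the origin has a direction angle `θ ∈ [0, π)`, which
gives `t = 2θ ∈ [0, 2π)`.
-/

noncomputable def mobius (p : ℝ × ℝ) : ℝ × ℝ × ℝ :=
  (cos p.1 + p.2 * cos (p.1 / 2), sin p.1 + p.2 * sin (p.1 / 2), p.2 * sin (p.1 / 2))

lemma mobius_two_mul (θ r : ℝ) :
    mobius (2 * θ, r) =
      ((2 * cos θ + r) * cos θ - 1, (2 * cos θ + r) * sin θ,
        (2 * cos θ + r) * sin θ - 2 * sin θ * cos θ) := by
  simp only [mobius, mul_div_cancel_left₀ θ two_ne_zero, cos_two_mul, sin_two_mul, Prod.mk.injEq]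
  refine ⟨by ring, by ring, by ring⟩

lemma exists_mem_Ico_pi_polar (a b : ℝ) :
    ∃ θ ∈ Ico 0 π, ∃ ρ : ℝ, a = ρ * cos θ ∧ b = ρ * sin θ := by
  set u : ℂ := ⟨a, b⟩
  have harg : u.arg = toIcoMod pi_pos 0 u.arg + toIcoDiv pi_pos 0 u.arg * π := by
    rw [← zsmul_eq_mul, toIcoMod_add_toIcoDiv_zsmul]
  refine ⟨_, toIcoMod_mem_Ico' pi_pos u.arg, ‖u‖ * (-1) ^ toIcoDiv pi_pos 0 u.arg, ?_, ?_⟩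
  · rw [mul_assoc, ← cos_add_int_mul_pi, ← harg, Complex.norm_mul_cos_arg]
  · rw [mul_assoc, ← sin_add_int_mul_pi, ← harg, Complex.norm_mul_sin_arg]

lemma sin_two_mul_eq_of_polar {a b ρ θ : ℝ} (ha : a = ρ * cos θ) (hb : b = ρ * sin θ)
    (hab : a ^ 2 + b ^ 2 ≠ 0) : 2 * sin θ * cos θ = 2 * b * a / (a ^ 2 + b ^ 2) := by
  rw [eq_div_iff hab, ha, hb]
  linear_combination (2 * sin θ * cos θ * ρ ^ 2) * sin_sq_add_cos_sq θ

lemma mobius_cross_section {x y : ℝ} (hxy : (x + 1) ^ 2 + y ^ 2 ≠ 0) :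
    {z : ℝ | (x, y, z) ∈ mobius '' (Ico 0 (2 * π) ×ˢ univ)} =
      {y - 2 * y * (x + 1) / ((x + 1) ^ 2 + y ^ 2)} := by
  ext z
  simp only [mem_ofPred_eq, mem_singleton_iff, mem_image]
  constructor
  · rintro ⟨⟨t, r⟩, -, h⟩
    obtain ⟨θ, rfl⟩ : ∃ θ, t = 2 * θ := ⟨t / 2, by ring⟩
    rw [mobius_two_mul] at h
    simp only [Prod.mk.injEq] at h
    obtain ⟨hx, hy, hz⟩ := h
    rw [← sin_two_mul_eq_of_polar (by linarith) hy.symm hxy, ← hz, hy]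
  · rintro rfl
    obtain ⟨θ, ⟨hθ₀, hθπ⟩, ρ, ha, hb⟩ := exists_mem_Ico_pi_polar (x + 1) y
    refine ⟨(2 * θ, ρ - 2 * cos θ), ⟨⟨by linarith, by linarith⟩, mem_univ _⟩, ?_⟩
    rw [mobius_two_mul, ← sin_two_mul_eq_of_polar ha hb hxy]
    simp only [Prod.mk.injEq]
    refine ⟨by linarith, by linarith, by rw [hb]; ring⟩

theorem simple_mobius_cross_section_singleton
    (w : ℝ × ℝ → ℝ × ℝ × ℝ)
    (hw : ∀ t r : ℝ, w (t, r) =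
      (Real.cos t + r * Real.cos (t / 2),
       Real.sin t + r * Real.sin (t / 2),
       r * Real.sin (t / 2)))
    (Pinf : Set (ℝ × ℝ)) (hPinf : Pinf = Set.Ico 0 (2 * π) ×ˢ Set.univ)
    (Z : ℝ → ℝ → Set ℝ)
    (hZ : ∀ x y : ℝ, Z x y = {z : ℝ | (x, y, z) ∈ w '' Pinf}) :
    ∀ x y : ℝ, (x, y) ≠ ((-1 : ℝ), (0 : ℝ)) → (Z x y).encard = 1 := by
  intro x y hxy
  have hw_eq : w = mobius := funext fun ⟨t, r⟩ => hw t r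
  have hN : (x + 1) ^ 2 + y ^ 2 ≠ 0 := by
    contrapose! hxy
    have hx : x + 1 = 0 := by nlinarith [sq_nonneg (x + 1), sq_nonneg y]
    have hy : y = 0 := by nlinarith [sq_nonneg (x + 1), sq_nonneg y]
    rw [Prod.mk.injEq]
    exact ⟨by linarith, hy⟩
  rw [hZ, hw_eq, hPinf, mobius_cross_section hN, encard_singleton]
end

section
/- Let δ > 0 be a real number, let P_δ := [0,2π) × [-δ,δ] ⊆ ℝ², and let v : ℝ² → ℝ³ be defined by v(t,r) := ((1 + r·cos(t/2))·cos t, (1 + r·cos(t/2))·sin t, r·sin(t/2)). Then the restriction of v to P_δ is injective if and only if δ < 2. -/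
open Real Set

private lemma mob_angle_eq (a b : ℝ) (ha0 : 0 ≤ a) (ha1 : a < 2*π) (hb0 : 0 ≤ b)
    (hb1 : b < 2*π) (hc : Real.cos a = Real.cos b) (hs : Real.sin a = Real.sin b) :
    a = b := by
  have hpi := Real.pi_pos
  have h1 : Real.cos (a - b) = 1 := by
    rw [Real.cos_sub, hc, hs]
    nlinarith [Real.sin_sq_add_cos_sq b]
  obtain ⟨n, hn⟩ := (Real.cos_eq_one_iff _).mp h1
  have hn0 : n = 0 := by
    have h2 : (n : ℝ) * (2 * π) < 2 * π := by linarith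
    have h3 : -(2*π) < (n : ℝ) * (2 * π) := by linarith
    have hn1 : (n:ℝ) < 1 := by nlinarith
    have hn2 : (-1 : ℝ) < (n:ℝ) := by nlinarith
    have hn1' : n < 1 := by exact_mod_cast hn1
    have hn2' : (-1:ℤ) < n := by exact_mod_cast hn2
    omega
  rw [hn0] at hn
  push_cast at hn
  linarith

private lemma mob_key (δ t r r' : ℝ) (hδ : δ < 2) (ht0 : 0 ≤ t) (ht1 : t < π)
    (hr : |r| ≤ δ) (hr' : |r'| ≤ δ)
    (h1 : 1 + r * Real.cos (t/2) = -(1 + r' * Real.cos ((t+π)/2)))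
    (h2 : r * Real.sin (t/2) = r' * Real.sin ((t+π)/2)) : False := by
  have hpi := Real.pi_pos
  have hhalf : (t+π)/2 = t/2 + π/2 := by ring
  rw [hhalf, Real.cos_add_pi_div_two] at h1
  rw [hhalf, Real.sin_add_pi_div_two] at h2
  set c := Real.cos (t/2) with hcdef
  set s := Real.sin (t/2) with hsdef
  have hcpos : 0 < c := Real.cos_pos_of_mem_Ioo ⟨by linarith, by linarith⟩
  have hsnn : 0 ≤ s := Real.sin_nonneg_of_nonneg_of_le_pi (by linarith) (by linarith)
  have hc1 : c ≤ 1 := Real.cos_le_one _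
  have hs1 : s ≤ 1 := Real.sin_le_one _
  have hpyth : c^2 + s^2 = 1 := by
    have := Real.sin_sq_add_cos_sq (t/2); linarith
  have hrl := abs_le.mp hr
  have hrl' := abs_le.mp hr'
  have e1 : r * c - r' * s = -2 := by linarith
  have e2 : r * s = r' * c := h2
  have e3 : r * (2*c^2 - 1) = -2*c := by
    linear_combination c * e1 - s * e2 + r * hpyth
  have e4' : c * (r' * (2*c^2 - 1) + 2*s) = 0 := by
    linear_combination s * e3 - (2*c^2-1) * e2
  have e4 : r' * (2*c^2 - 1) = -2*s := by
    rcases mul_eq_zero.mp e4' with h | h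
    · linarith
    · linarith
  rcases lt_trichotomy (2*c^2 - 1) 0 with hu | hu | hu
  · -- cos t < 0 : use r'
    have h5 : r' * (-(2*c^2-1)) < 2 * (-(2*c^2-1)) :=
      mul_lt_mul_of_pos_right (lt_of_le_of_lt hrl'.2 hδ) (by linarith)
    nlinarith [mul_nonneg (show (0:ℝ) ≤ 2*s+1 by linarith) (show (0:ℝ) ≤ 1-s by linarith)]
  · rw [hu, mul_zero] at e3; linarith
  · have h5 : -2 * (2*c^2-1) < r * (2*c^2-1) :=
      mul_lt_mul_of_pos_right (by linarith [hrl.1]) hu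
    nlinarith [mul_nonneg (show (0:ℝ) ≤ 2*c+1 by linarith) (show (0:ℝ) ≤ 1-c by linarith)]

private lemma mob_zero (t u r w : ℝ) (ht0 : 0 ≤ t) (ht1 : t < 2*π) (hu0 : 0 ≤ u)
    (hu1 : u < 2*π)
    (h1 : 1 + r * Real.cos (t/2) = 0) (h2 : 1 + w * Real.cos (u/2) = 0)
    (h3 : r * Real.sin (t/2) = w * Real.sin (u/2)) : t = u ∧ r = w := by
  have hpi := Real.pi_pos
  set c := Real.cos (t/2) with hcdef
  set s := Real.sin (t/2) with hsdef
  set c' := Real.cos (u/2) with hcdef'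
  set s' := Real.sin (u/2) with hsdef'
  have hsnn : 0 ≤ s := Real.sin_nonneg_of_nonneg_of_le_pi (by linarith) (by linarith)
  have hsnn' : 0 ≤ s' := Real.sin_nonneg_of_nonneg_of_le_pi (by linarith) (by linarith)
  have hpt : c^2 + s^2 = 1 := by have := Real.sin_sq_add_cos_sq (t/2); linarith
  have hpu : c'^2 + s'^2 = 1 := by have := Real.sin_sq_add_cos_sq (u/2); linarith
  have hr0 : r ≠ 0 := by intro h; rw [h] at h1; simp at h1
  have hw0 : w ≠ 0 := by intro h; rw [h] at h2; simp at h2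
  have hA : r^2 * c^2 = 1 := by linear_combination (r*c - 1) * h1
  have hB : w^2 * c'^2 = 1 := by linear_combination (w*c' - 1) * h2
  have h3sq : (r*s)^2 = (w*s')^2 := by rw [h3]
  have hr2 : r^2 = w^2 := by
    have k1 : r^2 = r^2*c^2 + (r*s)^2 := by linear_combination (-(r^2)) * hpt
    have k2 : w^2 = w^2*c'^2 + (w*s')^2 := by linear_combination (-(w^2)) * hpu
    linarith
  have hfac : (r - w) * (r + w) = 0 := by linear_combination hr2
  rcases mul_eq_zero.mp hfac with hrw | hrw
  · -- r = w
    have hrw' : r = w := by linarith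
    subst hrw'
    have hss : s = s' := by
      have := mul_left_cancel₀ hr0 h3; exact this
    have hcc : c = c' := by
      have : r * c = r * c' := by linarith
      exact mul_left_cancel₀ hr0 this
    have htu : t/2 = u/2 := by
      apply Real.injOn_cos ⟨by linarith, by linarith⟩ ⟨by linarith, by linarith⟩ hcc
    exact ⟨by linarith, rfl⟩
  · -- r = -w : impossible
    exfalso
    have hrw' : r = -w := by linarith
    have hsum : r * (s + s') = 0 := by
      rw [hrw'] at h3 ⊢; linarith
    have hss0 : s + s' = 0 := by
      rcases mul_eq_zero.mp hsum with h | h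
      · exact absurd h hr0
      · exact h
    have hs0 : s = 0 := by linarith
    have hs0' : s' = 0 := by linarith
    have ht : t = 0 := by
      by_contra h
      have : 0 < s := Real.sin_pos_of_pos_of_lt_pi (by cases (lt_or_eq_of_le ht0) with
        | inl h' => linarith
        | inr h' => exact absurd h'.symm h) (by linarith)
      linarith
    have hu : u = 0 := by
      by_contra h
      have : 0 < s' := Real.sin_pos_of_pos_of_lt_pi (by cases (lt_or_eq_of_le hu0) with
        | inl h' => linarith
        | inr h' => exact absurd h'.symm h) (by linarith)
      linarith
    have hc1 : c = 1 := by rw [hcdef, ht]; norm_num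
    have hc1' : c' = 1 := by rw [hcdef', hu]; norm_num
    rw [hc1] at h1
    rw [hc1'] at h2
    rw [hrw'] at h1
    linarith

private lemma mob_int_bound (n : ℤ) (b1 : (n:ℝ) * (2*π) < π)
    (b2 : -(3*π) < (n:ℝ) * (2*π)) : n = 0 ∨ n = -1 := by
  have hpi := Real.pi_pos
  have c1 : (n:ℝ) < 1 := by nlinarith
  have c2 : (-2:ℝ) < (n:ℝ) := by nlinarith
  have c1' : n < 1 := by exact_mod_cast c1
  have c2' : (-2:ℤ) < n := by exact_mod_cast c2
  omega

theorem common_mobius_injective_iff (δ : ℝ) (hδ : 0 < δ)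
    (v : ℝ × ℝ → ℝ × ℝ × ℝ)
    (hv : ∀ t r : ℝ, v (t, r) =
      ((1 + r * Real.cos (t / 2)) * Real.cos t,
       (1 + r * Real.cos (t / 2)) * Real.sin t,
       r * Real.sin (t / 2)))
    (P : Set (ℝ × ℝ)) (hP : P = Set.Ico 0 (2 * π) ×ˢ Set.Icc (-δ) δ) :
    Set.InjOn v P ↔ δ < 2 := by
  have hpi := Real.pi_pos
  subst hP
  constructor
  · intro hinj
    by_contra h
    push_neg at h
    have hmem1 : ((0:ℝ), (-2:ℝ)) ∈ Set.Ico 0 (2*π) ×ˢ Set.Icc (-δ) δ :=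
      ⟨show (0:ℝ) ∈ Set.Ico 0 (2*π) from ⟨le_refl _, by linarith⟩,
       show (-2:ℝ) ∈ Set.Icc (-δ) δ from ⟨by linarith, by linarith⟩⟩
    have hmem2 : ((π:ℝ), (0:ℝ)) ∈ Set.Ico 0 (2*π) ×ˢ Set.Icc (-δ) δ :=
      ⟨show (π:ℝ) ∈ Set.Ico 0 (2*π) from ⟨by linarith, by linarith⟩,
       show (0:ℝ) ∈ Set.Icc (-δ) δ from ⟨by linarith, by linarith⟩⟩
    have hveq : v (0, -2) = v (π, 0) := by
      rw [hv, hv]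
      norm_num
    have := hinj hmem1 hmem2 hveq
    have h0 : (0:ℝ) = π := congrArg Prod.fst this
    linarith
  · intro hδ2
    rintro ⟨t, r⟩ ⟨hp1, hp2⟩ ⟨u, w⟩ ⟨hq1, hq2⟩ hvpq
    simp only [Set.mem_Ico, Set.mem_Icc] at hp1 hp2 hq1 hq2
    rw [hv, hv, Prod.mk.injEq, Prod.mk.injEq] at hvpq
    obtain ⟨e1, e2, e3⟩ := hvpq
    have hrabs : |r| ≤ δ := abs_le.mpr ⟨hp2.1, hp2.2⟩
    have hwabs : |w| ≤ δ := abs_le.mpr ⟨hq2.1, hq2.2⟩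
    set ρ := 1 + r * Real.cos (t/2) with hρdef
    set ρ' := 1 + w * Real.cos (u/2) with hρ'def
    have f1 : (ρ * Real.cos t)^2 = (ρ' * Real.cos u)^2 := by rw [e1]
    have f2 : (ρ * Real.sin t)^2 = (ρ' * Real.sin u)^2 := by rw [e2]
    have hρ2 : ρ^2 = ρ'^2 := by
      linear_combination f1 + f2 - ρ^2 * (Real.sin_sq_add_cos_sq t)
        + ρ'^2 * (Real.sin_sq_add_cos_sq u)
    by_cases hρ0 : ρ = 0
    · have hρ0' : ρ' = 0 := by
        have : ρ'^2 = 0 := by rw [← hρ2, hρ0]; ring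
        exact pow_eq_zero_iff (by norm_num) |>.mp this
      obtain ⟨htu, hrw⟩ := mob_zero t u r w hp1.1 hp1.2 hq1.1 hq1.2 hρ0 hρ0' e3
      exact Prod.ext htu hrw
    · have hρ0' : ρ' ≠ 0 := by
        intro h
        apply hρ0
        have : ρ^2 = 0 := by rw [hρ2, h]; ring
        exact pow_eq_zero_iff (by norm_num) |>.mp this
      have hfac : (ρ - ρ') * (ρ + ρ') = 0 := by linear_combination hρ2
      rcases mul_eq_zero.mp hfac with hcase | hcase
      · -- ρ = ρ'
        have hρρ : ρ = ρ' := by linarith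
        rw [← hρρ] at e1 e2
        have hct : Real.cos t = Real.cos u := mul_left_cancel₀ hρ0 e1
        have hst : Real.sin t = Real.sin u := mul_left_cancel₀ hρ0 e2
        have htu : t = u := mob_angle_eq t u hp1.1 hp1.2 hq1.1 hq1.2 hct hst
        subst htu
        have hrw : r = w := by
          by_cases hc0 : Real.cos (t/2) = 0
          · have hs0 : Real.sin (t/2) ≠ 0 := by
              intro h
              have := Real.sin_sq_add_cos_sq (t/2)
              rw [h, hc0] at this; norm_num at this
            exact mul_right_cancel₀ hs0 e3
          · have : r * Real.cos (t/2) = w * Real.cos (t/2) := by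
              rw [hρdef, hρ'def] at hρρ; linarith
            exact mul_right_cancel₀ hc0 this
        exact Prod.ext rfl hrw
      · -- ρ = -ρ'
        exfalso
        have hρρ : ρ = -ρ' := by linarith
        rw [hρρ] at e1 e2
        have hρ'0 := hρ0'
        have hct : Real.cos t = -Real.cos u := by
          have h0 : ρ' * (Real.cos t + Real.cos u) = 0 := by linear_combination (-1 : ℝ) * e1
          rcases mul_eq_zero.mp h0 with h | h
          · exact absurd h hρ0'
          · linarith
        have hst : Real.sin t = -Real.sin u := by
          have h0 : ρ' * (Real.sin t + Real.sin u) = 0 := by linear_combination (-1 : ℝ) * e2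
          rcases mul_eq_zero.mp h0 with h | h
          · exact absurd h hρ0'
          · linarith
        have hcos1 : Real.cos (t - u - π) = 1 := by
          rw [show t - u - π = (t - u) - π by ring, Real.cos_sub_pi, Real.cos_sub, hct, hst]
          linear_combination Real.sin_sq_add_cos_sq u
        obtain ⟨n, hn⟩ := (Real.cos_eq_one_iff _).mp hcos1
        have hn01 : n = 0 ∨ n = -1 :=
          mob_int_bound n (by linarith [hp1.2, hq1.1]) (by linarith [hp1.1, hq1.2])
        rcases hn01 with hn0 | hn0
    --
        · -- t = u + π, with u ∈ [0, π)
          rw [hn0] at hn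
          push_cast at hn
          have htu : t = u + π := by linarith
          have hult : u < π := by linarith [hp1.2]
          apply mob_key δ u w r hδ2 hq1.1 hult hwabs hrabs
          · rw [hρdef, hρ'def, htu] at hρρ; linarith
          · rw [htu] at e3; linarith
        · -- u = t + π, with t ∈ [0, π)
          rw [hn0] at hn
          push_cast at hn
          have htu : u = t + π := by linarith
          have htlt : t < π := by linarith [hq1.2]
          apply mob_key δ t r w hδ2 hp1.1 htlt hrabs hwabs
          · rw [hρdef, hρ'def, htu] at hρρ; linarith
          · rw [htu] at e3; exact e3
end

section
/- Let v(t,r) := ((1 + r·cos(t/2))·cos t, (1 + r·cos(t/2))·sin t, r·sin(t/2)) and P_∞ := [0,2π) × ℝ. For (x,y) ∈ ℝ², define Z_v(x,y) := { z ∈ ℝ : (x,y,z) ∈ v(P_∞) }. Then for every (x,y) ∈ ℝ² with x ≠ −1 and y ≠ 0, the set Z_v(x,y) has exactly two elements. -/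
open Real Set

private lemma mobius_key_exists (c s r x y z : ℝ) (hcs : c ^ 2 + s ^ 2 = 1) (hs : 0 < s)
    (hx : x = (1 + r * c) * (c ^ 2 - s ^ 2)) (hy : y = (1 + r * c) * (2 * s * c))
    (hz : z = r * s) :
    ∃ t ∈ Set.Ico (0 : ℝ) (2 * π),
      ((1 + r * Real.cos (t / 2)) * Real.cos t,
       (1 + r * Real.cos (t / 2)) * Real.sin t,
       r * Real.sin (t / 2)) = (x, y, z) := by
  have hc1 : -1 < c := by nlinarith
  have hc2 : c < 1 := by nlinarith
  refine ⟨2 * Real.arccos c, ⟨by have := Real.arccos_nonneg c; linarith, ?_⟩, ?_⟩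
  · have harc : Real.arccos c < π := by
      rw [Real.arccos]
      have := Real.neg_pi_div_two_lt_arcsin.mpr hc1
      linarith
    linarith
  · have h2 : (2 * Real.arccos c) / 2 = Real.arccos c := by ring
    have hcos : Real.cos (Real.arccos c) = c := Real.cos_arccos hc1.le hc2.le
    have hsin : Real.sin (Real.arccos c) = s := by
      rw [Real.sin_arccos, show 1 - c ^ 2 = s ^ 2 by linarith]
      exact Real.sqrt_sq hs.le
    have hct : Real.cos (2 * Real.arccos c) = 2 * c ^ 2 - 1 := by
      rw [Real.cos_two_mul, hcos]
    have hst : Real.sin (2 * Real.arccos c) = 2 * s * c := by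
      rw [Real.sin_two_mul, hsin, hcos]
    rw [h2, hcos, hsin, hct, hst, Prod.mk.injEq, Prod.mk.injEq]
    refine ⟨?_, ?_, ?_⟩
    · rw [hx]; linear_combination (1 + r * c) * hcs
    · rw [hy]
    · rw [hz]

theorem common_mobius_cross_section_pair
    (v : ℝ × ℝ → ℝ × ℝ × ℝ)
    (hv : ∀ t r : ℝ, v (t, r) =
      ((1 + r * Real.cos (t / 2)) * Real.cos t,
       (1 + r * Real.cos (t / 2)) * Real.sin t,
       r * Real.sin (t / 2)))
    (Pinf : Set (ℝ × ℝ)) (hPinf : Pinf = Set.Ico 0 (2 * π) ×ˢ Set.univ)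
    (Z : ℝ → ℝ → Set ℝ)
    (hZ : ∀ x y : ℝ, Z x y = {z : ℝ | (x, y, z) ∈ v '' Pinf}) :
    ∀ x y : ℝ, x ≠ -1 → y ≠ 0 → (Z x y).encard = 2 := by
  intro x y hx1 hy
  have hy2 : 0 < y ^ 2 := by positivity
  set R := Real.sqrt (x ^ 2 + y ^ 2) with hRdef
  have hR2 : R ^ 2 = x ^ 2 + y ^ 2 := Real.sq_sqrt (by positivity)
  have hRnn : 0 ≤ R := Real.sqrt_nonneg _
  have hRpos : 0 < R := by nlinarith
  have hRx1 : x < R := by nlinarith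
  have hRx2 : -R < x := by nlinarith
  set z1 := (R - 1) * (R - x) / y with hz1def
  set z2 := (R + 1) * (R + x) / y with hz2def
  have hz12 : z1 ≠ z2 := by
    intro h
    rw [hz1def, hz2def, div_eq_div_iff hy hy] at h
    have hx1' : x + 1 ≠ 0 := fun hc => hx1 (by linarith)
    have h0 : 2 * R * (x + 1) * y = 0 := by linear_combination (-1) * h
    rcases mul_eq_zero.mp h0 with h' | h'
    · rcases mul_eq_zero.mp h' with h'' | h''
      · nlinarith
      · exact hx1' h''
    · exact hy h'
  have hset : Z x y = {z1, z2} := by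
    rw [hZ]
    ext z
    simp only [Set.mem_setOf_eq, Set.mem_insert_iff, Set.mem_singleton_iff, Set.mem_image,
      hPinf, Set.mem_prod, Set.mem_univ, and_true]
    constructor
    · rintro ⟨⟨t, r⟩, ht, hvtr⟩
      rw [hv, Prod.mk.injEq, Prod.mk.injEq] at hvtr
      obtain ⟨ex, ey, ez⟩ := hvtr
      set c := Real.cos (t / 2) with hcdef
      set s := Real.sin (t / 2) with hsdef
      have hcs : s ^ 2 + c ^ 2 = 1 := Real.sin_sq_add_cos_sq _
      have hct : Real.cos t = 2 * c ^ 2 - 1 := by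
        rw [show t = 2 * (t / 2) by ring, Real.cos_two_mul]
      have hst : Real.sin t = 2 * s * c := by
        rw [show t = 2 * (t / 2) by ring, Real.sin_two_mul]
      rw [hct] at ex
      rw [hst] at ey
      have hP2 : ((1 + r * c) - R) * ((1 + r * c) + R) = 0 := by
        have h : (1 + r * c) ^ 2 = R ^ 2 := by
          rw [hR2]
          linear_combination (x + (1 + r * c) * (2 * c ^ 2 - 1)) * ex +
            (y + (1 + r * c) * (2 * s * c)) * ey +
            (-(4 * c ^ 2 * (1 + r * c) ^ 2)) * hcs
        linear_combination h
      rcases mul_eq_zero.mp hP2 with hP | hP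
      · left
        have hP' : 1 + r * c = R := by linarith
        have hrc : r * c = R - 1 := by linarith
        have ex' : R * (2 * c ^ 2 - 1) = x := by rw [← hP']; exact ex
        have hs2 : 2 * R * s ^ 2 = R - x := by
          linear_combination (-1) * ex' + (2 * R) * hcs
        have hy' : y = 2 * R * s * c := by
          linear_combination (-1) * ey + (2 * s * c) * hP'
        have hzy : z * y = (R - 1) * (R - x) := by
          rw [← ez, hy']
          linear_combination (2 * R * s ^ 2) * hrc + (R - 1) * hs2
        rw [hz1def, eq_div_iff hy]
        exact hzy
      · right
        have hP' : 1 + r * c = -R := by linarith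
        have hrc : r * c = -R - 1 := by linarith
        have ex' : -R * (2 * c ^ 2 - 1) = x := by rw [← hP']; exact ex
        have hs2 : 2 * R * s ^ 2 = R + x := by
          linear_combination ex' + (2 * R) * hcs
        have hy' : y = -(2 * R * s * c) := by
          linear_combination (-1) * ey + (2 * s * c) * hP'
        have hzy : z * y = (R + 1) * (R + x) := by
          rw [← ez, hy']
          linear_combination (-(2 * R * s ^ 2)) * hrc + (R + 1) * hs2
        rw [hz2def, eq_div_iff hy]
        exact hzy
    · have hsub : ∀ c s r : ℝ, c ^ 2 + s ^ 2 = 1 → 0 < s →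
          ∀ z, z = r * s → (x = (1 + r * c) * (c ^ 2 - s ^ 2)) →
          (y = (1 + r * c) * (2 * s * c)) →
          ∃ p : ℝ × ℝ, p.1 ∈ Set.Ico 0 (2 * π) ∧ v p = (x, y, z) := by
        intro c s r hcs hs z hz hxe hye
        obtain ⟨t, ht, heq⟩ := mobius_key_exists c s r x y z hcs hs hxe hye hz
        exact ⟨(t, r), ht, by rw [hv]; exact heq⟩
      rintro (rfl | rfl)
      · have hRx : 0 < (R - x) / (2 * R) := div_pos (by linarith) (by linarith)
        set s0 := Real.sqrt ((R - x) / (2 * R)) with hs0def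
        have hs0pos : 0 < s0 := Real.sqrt_pos.mpr hRx
        have hs0sq : s0 ^ 2 = (R - x) / (2 * R) := Real.sq_sqrt hRx.le
        have hs0ne : s0 ≠ 0 := hs0pos.ne'
        have hRne : R ≠ 0 := hRpos.ne'
        set c0 := y / (2 * R * s0) with hc0def
        have hA : (2 * R * s0) ^ 2 = 2 * R * (R - x) := by
          rw [mul_pow, mul_pow, hs0sq]
          field_simp
        have hysq : y ^ 2 = (R - x) * (R + x) := by linear_combination - hR2
        have hc0sq : c0 ^ 2 = (R + x) / (2 * R) := by
          rw [hc0def, div_pow, hA, hysq,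
            div_eq_div_iff (ne_of_gt (by nlinarith : (0:ℝ) < 2 * R * (R - x)))
              (ne_of_gt (by linarith : (0:ℝ) < 2 * R))]
          ring
        set r0 := (R - 1) * (2 * R * s0) / y with hr0def
        have hrc : r0 * c0 = R - 1 := by
          rw [hr0def, hc0def]
          field_simp
        have hP : 1 + r0 * c0 = R := by rw [hrc]; ring
        have hcs : c0 ^ 2 + s0 ^ 2 = 1 := by
          rw [hc0sq, hs0sq]
          field_simp
          ring
        refine hsub c0 s0 r0 hcs hs0pos z1 ?_ ?_ ?_
        · have h2 : 2 * R * s0 ^ 2 = R - x := by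
            rw [hs0sq]
            field_simp
          rw [hz1def, hr0def]
          rw [div_mul_eq_mul_div, div_eq_div_iff hy hy]
          linear_combination (-((R - 1) * y)) * h2
        · rw [hP, hc0sq, hs0sq]
          field_simp
          ring
        · rw [hP, hc0def]
          field_simp
      · have hRx : 0 < (R + x) / (2 * R) := div_pos (by linarith) (by linarith)
        set s0 := Real.sqrt ((R + x) / (2 * R)) with hs0def
        have hs0pos : 0 < s0 := Real.sqrt_pos.mpr hRx
        have hs0sq : s0 ^ 2 = (R + x) / (2 * R) := Real.sq_sqrt hRx.le
        have hs0ne : s0 ≠ 0 := hs0pos.ne'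
        have hRne : R ≠ 0 := hRpos.ne'
        set c0 := -y / (2 * R * s0) with hc0def
        have hA : (2 * R * s0) ^ 2 = 2 * R * (R + x) := by
          rw [mul_pow, mul_pow, hs0sq]
          field_simp
        have hysq : y ^ 2 = (R - x) * (R + x) := by linear_combination - hR2
        have hc0sq : c0 ^ 2 = (R - x) / (2 * R) := by
          rw [hc0def, div_pow, hA, neg_pow, hysq]
          rw [div_eq_div_iff (ne_of_gt (by nlinarith : (0:ℝ) < 2 * R * (R + x)))
            (ne_of_gt (by linarith : (0:ℝ) < 2 * R))]
          ring
        set r0 := (R + 1) * (2 * R * s0) / y with hr0def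
        have hrc : r0 * c0 = -R - 1 := by
          rw [hr0def, hc0def]
          field_simp
          ring
        have hP : 1 + r0 * c0 = -R := by rw [hrc]; ring
        have hcs : c0 ^ 2 + s0 ^ 2 = 1 := by
          rw [hc0sq, hs0sq]
          field_simp
          ring
        refine hsub c0 s0 r0 hcs hs0pos z2 ?_ ?_ ?_
        · have h2 : 2 * R * s0 ^ 2 = R + x := by
            rw [hs0sq]
            field_simp
          rw [hz2def, hr0def]
          rw [div_mul_eq_mul_div, div_eq_div_iff hy hy]
          linear_combination (-((R + 1) * y)) * h2
        · rw [hP, hc0sq, hs0sq]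
          field_simp
          ring
        · rw [hP, hc0def]
          field_simp
  rw [hset]
  exact Set.encard_pair hz12
end

section
/- Let v(t,r) := ((1 + r·cos(t/2))·cos t, (1 + r·cos(t/2))·sin t, r·sin(t/2)) and P_∞ := [0,2π) × ℝ. For (x,y) ∈ ℝ², define Z_v(x,y) := { z ∈ ℝ : (x,y,z) ∈ v(P_∞) }. Then for every x ∈ ℝ with x ∉ {−1, 0}, the set Z_v(x,0) has exactly one element. -/
open Real Set

theorem common_mobius_cross_section_y_zero
    (v : ℝ × ℝ → ℝ × ℝ × ℝ)
    (hv : ∀ t r : ℝ, v (t, r) =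
      ((1 + r * Real.cos (t / 2)) * Real.cos t,
       (1 + r * Real.cos (t / 2)) * Real.sin t,
       r * Real.sin (t / 2)))
    (Pinf : Set (ℝ × ℝ)) (hPinf : Pinf = Set.Ico 0 (2 * π) ×ˢ Set.univ)
    (Z : ℝ → ℝ → Set ℝ)
    (hZ : ∀ x y : ℝ, Z x y = {z : ℝ | (x, y, z) ∈ v '' Pinf}) :
    ∀ x : ℝ, x ≠ -1 → x ≠ 0 → (Z x 0).encard = 1 := by
  intro x hx1 hx0
  have hZeq : Z x 0 = {0} := by
    rw [hZ]
    ext z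
    simp only [Set.mem_setOf_eq, Set.mem_image, Set.mem_singleton_iff]
    constructor
    · rintro ⟨⟨t, r⟩, hmem, heq⟩
      rw [hv] at heq
      rw [hPinf] at hmem
      obtain ⟨⟨ht0, ht2⟩, -⟩ := hmem
      have hx : (1 + r * Real.cos (t / 2)) * Real.cos t = x := congrArg Prod.fst heq
      have hy : (1 + r * Real.cos (t / 2)) * Real.sin t = 0 :=
        congrArg (Prod.fst ∘ Prod.snd) heq
      have hzz : r * Real.sin (t / 2) = z := congrArg (Prod.snd ∘ Prod.snd) heq
      have hA : (1 + r * Real.cos (t / 2)) ≠ 0 := by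
        intro h
        apply hx0
        rw [← hx, h, zero_mul]
      have hsin : Real.sin t = 0 := by
        rcases mul_eq_zero.mp hy with h | h
        · exact absurd h hA
        · exact h
      rw [Real.sin_eq_zero_iff] at hsin
      obtain ⟨n, hn⟩ := hsin
      have hπ : (0:ℝ) < π := Real.pi_pos
      have hn0 : 0 ≤ n := by
        by_contra h
        push_neg at h
        have : (n:ℝ) * π < 0 := mul_neg_of_neg_of_pos (by exact_mod_cast h) hπ
        linarith [ht0, hn ▸ this]
      have hn2 : n < 2 := by
        by_contra h
        push_neg at h
        have : (2:ℝ) * π ≤ (n:ℝ) * π := by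
          apply mul_le_mul_of_nonneg_right _ hπ.le
          exact_mod_cast h
        linarith [ht2, hn ▸ this]
      interval_cases n
      · -- t = 0
        have ht : t = 0 := by simpa using hn.symm
        rw [← hzz, ht]
        simp
      · -- t = π : x = -1, contradiction
        have ht : t = π := by simpa using hn.symm
        exfalso
        apply hx1
        rw [← hx, ht]
        simp [Real.cos_pi_div_two, Real.cos_pi]
    · rintro rfl
      refine ⟨(0, x - 1), ?_, ?_⟩
      · rw [hPinf]
        constructor
        · exact ⟨le_refl 0, by positivity⟩
        · trivial
      · rw [hv]
        norm_num
  rw [hZeq]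
  exact Set.encard_singleton 0
end

section
/- Let v(t,r) := ((1 + r·cos(t/2))·cos t, (1 + r·cos(t/2))·sin t, r·sin(t/2)) and P_∞ := [0,2π) × ℝ. For (x,y) ∈ ℝ², define Z_v(x,y) := { z ∈ ℝ : (x,y,z) ∈ v(P_∞) }. Then for every (x,y) ∈ ℝ², the set Z_v(x,y) is nonempty. -/
open Real Set

lemma mobius_helper (a s : ℝ) (ha1 : -1 < a) (ha2 : a ≤ 1) :
    ∃ t ∈ Set.Ico 0 π, ∃ r : ℝ,
      (1 + r * Real.cos (t / 2)) * Real.cos t = s * a ∧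
      (1 + r * Real.cos (t / 2)) * Real.sin t = s * Real.sqrt (1 - a ^ 2) := by
  have hlt : Real.arccos a < π := by
    rw [Real.arccos]
    have := Real.neg_pi_div_two_lt_arcsin.mpr ha1
    linarith
  have hge : 0 ≤ Real.arccos a := Real.arccos_nonneg a
  have hc : 0 < Real.cos (Real.arccos a / 2) := by
    apply Real.cos_pos_of_mem_Ioo
    constructor
    · linarith [Real.pi_pos]
    · linarith
  refine ⟨Real.arccos a, ⟨hge, hlt⟩,
    (s - 1) / Real.cos (Real.arccos a / 2), ?_, ?_⟩
  · rw [div_mul_cancel₀ _ (ne_of_gt hc), Real.cos_arccos (le_of_lt ha1) ha2]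
    ring
  · rw [div_mul_cancel₀ _ (ne_of_gt hc), Real.sin_arccos]
    ring

theorem common_mobius_cross_section_nonempty
    (v : ℝ × ℝ → ℝ × ℝ × ℝ)
    (hv : ∀ t r : ℝ, v (t, r) =
      ((1 + r * Real.cos (t / 2)) * Real.cos t,
       (1 + r * Real.cos (t / 2)) * Real.sin t,
       r * Real.sin (t / 2)))
    (Pinf : Set (ℝ × ℝ)) (hPinf : Pinf = Set.Ico 0 (2 * π) ×ˢ Set.univ)
    (Z : ℝ → ℝ → Set ℝ)
    (hZ : ∀ x y : ℝ, Z x y = {z : ℝ | (x, y, z) ∈ v '' Pinf}) :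
    ∀ x y : ℝ, (Z x y).Nonempty := by
  intro x y
  have key : ∃ t ∈ Set.Ico 0 π, ∃ r : ℝ,
      (1 + r * Real.cos (t / 2)) * Real.cos t = x ∧
      (1 + r * Real.cos (t / 2)) * Real.sin t = y := by
    rcases eq_or_ne y 0 with hy | hy
    · exact ⟨0, ⟨le_refl 0, Real.pi_pos⟩, x - 1, by simp, by simp [hy]⟩
    · set n := Real.sqrt (x ^ 2 + y ^ 2) with hn
      have hn2 : n ^ 2 = x ^ 2 + y ^ 2 := Real.sq_sqrt (by positivity)
      have hnpos : 0 < n := Real.sqrt_pos.mpr (by positivity)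
      have hy2 : 0 < y ^ 2 := by positivity
      have hax : |x| < n := by nlinarith [sq_abs x, abs_nonneg x]
      have hx1 : x < n := lt_of_le_of_lt (le_abs_self x) hax
      have hx2 : -n < x := by nlinarith [neg_abs_le x]
      rcases lt_or_gt_of_ne hy with hneg | hpos
      · -- y < 0 : a = -x/n, s = -n
        obtain ⟨t, ht, r, h1, h2⟩ := mobius_helper (-x / n) (-n)
          ((lt_div_iff₀ hnpos).mpr (by linarith)) ((div_le_one hnpos).mpr (by linarith))
        have hs : Real.sqrt (1 - (-x / n) ^ 2) = -y / n := by
          rw [show (1 - (-x / n) ^ 2) = (-y / n) ^ 2 by field_simp; nlinarith]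
          exact Real.sqrt_sq (div_nonneg (by linarith) hnpos.le)
        refine ⟨t, ht, r, ?_, ?_⟩
        · rw [h1]; field_simp
        · rw [h2, hs]; field_simp
      · -- y > 0 : a = x/n, s = n
        obtain ⟨t, ht, r, h1, h2⟩ := mobius_helper (x / n) n
          ((lt_div_iff₀ hnpos).mpr (by linarith)) ((div_le_one hnpos).mpr (by linarith))
        have hs : Real.sqrt (1 - (x / n) ^ 2) = y / n := by
          rw [show (1 - (x / n) ^ 2) = (y / n) ^ 2 by field_simp; nlinarith]
          exact Real.sqrt_sq (div_nonneg (by linarith) hnpos.le)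
        refine ⟨t, ht, r, ?_, ?_⟩
        · rw [h1]; field_simp
        · rw [h2, hs]; field_simp
  obtain ⟨t, ⟨ht0, htpi⟩, r, h1, h2⟩ := key
  refine ⟨r * Real.sin (t / 2), ?_⟩
  rw [hZ]
  refine ⟨(t, r), ?_, ?_⟩
  · rw [hPinf]
    exact ⟨⟨ht0, by linarith [Real.pi_pos]⟩, trivial⟩
  · rw [hv, h1, h2]
end

section
/- Let v(t,r) := ((1 + r·cos(t/2))·cos t, (1 + r·cos(t/2))·sin t, r·sin(t/2)). Then every point (x,y,z) in the image v(ℝ²) satisfies the cubic equation −y + x²y + y³ − 2xz − 2x²z − 2y²z + yz² = 0. -/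
open Real Set

theorem common_mobius_on_cubic_surface
    (v : ℝ × ℝ → ℝ × ℝ × ℝ)
    (hv : ∀ t r : ℝ, v (t, r) =
      ((1 + r * Real.cos (t / 2)) * Real.cos t,
       (1 + r * Real.cos (t / 2)) * Real.sin t,
       r * Real.sin (t / 2))) :
    ∀ q ∈ v '' Set.univ,
      -(q.2.1) + q.1 ^ 2 * q.2.1 + q.2.1 ^ 3 - 2 * q.1 * q.2.2 - 2 * q.1 ^ 2 * q.2.2
        - 2 * q.2.1 ^ 2 * q.2.2 + q.2.1 * q.2.2 ^ 2 = 0 := by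
  rintro q ⟨⟨t, r⟩, -, rfl⟩
  rw [hv]
  set s := Real.sin (t / 2) with hs
  set c := Real.cos (t / 2) with hc
  have hct : Real.cos t = 2 * c ^ 2 - 1 := by
    rw [hc, ← Real.cos_two_mul]; ring_nf
  have hst : Real.sin t = 2 * s * c := by
    rw [hs, hc, ← Real.sin_two_mul]; ring_nf
  have h : s ^ 2 + c ^ 2 = 1 := Real.sin_sq_add_cos_sq (t / 2)
  simp only [hct, hst]
  linear_combination (8 * s * c ^ 3 - 8 * r * s * c ^ 2 + 24 * r * s * c ^ 4
    + 2 * r ^ 2 * s * c - 16 * r ^ 2 * s * c ^ 3 + 24 * r ^ 2 * s * c ^ 5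
    + 2 * r ^ 3 * s * c ^ 2 - 8 * r ^ 3 * s * c ^ 4 + 8 * r ^ 3 * s * c ^ 6) * h
end
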